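/- arXiv:1510.05012 — 5 statements merged into one kernel-verified Lean document; each statement's English description precedes it below -/
import Mathlib

section
/- Let d = ℓ + k with ℓ, k ≥ 1, let x ∈ R^ℓ, and let ψ : N → R^+ be a nonincreasing function such that ∑_{q∈N} ψ(q)^d diverges. Then the sum of ψ(q)^k over all q ∈ N satisfying ‖qx‖ < ψ(q) also diverges. -/
open scoped Classical

/-- Sup-norm distance from `x ∈ ℝ^ℓ` to the nearest integer point of `ℤ^ℓ`. -/
noncomputable def distInt {l : ℕ} (x : Fin l → ℝ) : ℝ :=
  ⨅ p : Fin l → ℤ, ‖x - fun i => (p i : ℝ)‖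

/-!
Replacing `ψ` by `min ψ 1` we may assume `ψ ≤ 1`. Put `δ_N = ψ(2^N)` and let `A_N` count the
`q ≤ 2^N` with `‖qx‖ < δ_N`. Dirichlet's pigeonhole argument gives `2^N δ_N^ℓ ≤ 2^ℓ (A_N + 1)`,
and at least `A_(N+1) - A_N` integers `q ∈ (2^N, 2^(N+1)]` have `‖qx‖ < δ_(N+1) ≤ ψ(q)`, each
contributing at least `δ_(N+1)^k` to the sum. Abel summation of these block estimates, together
with `k (a^(ℓ+k) - b^(ℓ+k)) ≤ (ℓ+k) a^ℓ (a^k - b^k)` for `0 ≤ b ≤ a`, shows that if the sum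
converges then so does `∑ 2^N δ_(N+1)^(ℓ+k)`, contradicting Cauchy condensation.
-/

open Finset

theorem natCast_mul_pow_mul_sub_le_mul_pow_sub_pow (k : ℕ) {a b : ℝ} (hb : 0 ≤ b) (hba : b ≤ a) :
    k * b ^ k * (a - b) ≤ a * (a ^ k - b ^ k) := by
  induction k with
  | zero => simp
  | succ k ih =>
    have hk : 0 ≤ a ^ k - b ^ k := sub_nonneg.2 (pow_le_pow_left₀ hb hba k)
    have h₁ := mul_le_mul_of_nonneg_left ih hb
    have h₂ := mul_le_mul_of_nonneg_right (mul_le_mul_of_nonneg_right hba (hb.trans hba)) hk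
    have h₃ := mul_le_mul_of_nonneg_left hba (mul_nonneg (pow_nonneg hb k) (sub_nonneg.2 hba))
    push_cast
    linear_combination h₁ + h₂ + h₃

theorem natCast_mul_pow_add_sub_pow_add_le (l k : ℕ) {a b : ℝ} (hb : 0 ≤ b) (hba : b ≤ a) :
    k * (a ^ (l + k) - b ^ (l + k)) ≤ (l + k) * a ^ l * (a ^ k - b ^ k) := by
  induction l with
  | zero => simp
  | succ l ih =>
    have ha : 0 ≤ a := hb.trans hba
    have hk : 0 ≤ a ^ k - b ^ k := sub_nonneg.2 (pow_le_pow_left₀ hb hba k)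
    have h₁ := mul_le_mul_of_nonneg_left ih ha
    have h₂ := mul_le_mul_of_nonneg_left (natCast_mul_pow_mul_sub_le_mul_pow_sub_pow k hb hba)
      (pow_nonneg hb l)
    have h₃ := mul_le_mul_of_nonneg_right (pow_le_pow_left₀ hb hba l) (mul_nonneg ha hk)
    push_cast
    linear_combination h₁ + h₂ + h₃

theorem distInt_lt_of_abs_sub_lt {l : ℕ} {x : Fin l → ℝ} {δ : ℝ} (hδ : 0 < δ) (p : Fin l → ℤ)
    (h : ∀ i, |x i - p i| < δ) : distInt x < δ :=
  (ciInf_le ⟨0, by rintro _ ⟨q, rfl⟩; positivity⟩ p).trans_lt <|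
    (pi_norm_lt_iff hδ).2 fun i => by simpa using h i

theorem distInt_sub_lt_of_floor_fract_div_eq {l : ℕ} {y z : Fin l → ℝ} {δ : ℝ} (hδ : 0 < δ)
    (h : ∀ i, ⌊Int.fract (y i) / δ⌋₊ = ⌊Int.fract (z i) / δ⌋₊) : distInt (y - z) < δ := by
  refine distInt_lt_of_abs_sub_lt hδ (fun i => ⌊y i⌋ - ⌊z i⌋) fun i => ?_
  have hy := div_nonneg (Int.fract_nonneg (y i)) hδ.le
  have hz := div_nonneg (Int.fract_nonneg (z i)) hδ.le
  have hfract : |Int.fract (y i) / δ - Int.fract (z i) / δ| < 1 := by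
    rw [abs_sub_lt_iff]
    constructor <;> linarith [Nat.floor_le hy, Nat.floor_le hz,
      Nat.lt_floor_add_one (Int.fract (y i) / δ), Nat.lt_floor_add_one (Int.fract (z i) / δ), congrArg (Nat.cast (R := ℝ)) (h i)]
  rw [← sub_div, abs_div, abs_of_pos hδ, div_lt_one hδ] at hfract
  have heq : (y - z) i - ((⌊y i⌋ - ⌊z i⌋ : ℤ) : ℝ) = Int.fract (y i) - Int.fract (z i) := by
    rw [Pi.sub_apply, Int.fract, Int.fract]
    push_cast
    ring
  rwa [heq]

/-- The differences `max s - q` with `q ∈ s` are distinct elements of `(0, Q]`. -/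
theorem card_le_card_filter_Ioc_add_one {s : Finset ℕ} {Q : ℕ} (hs : ∀ q ∈ s, q ≤ Q)
    (P : ℕ → Prop) [DecidablePred P] (hP : ∀ a ∈ s, ∀ b ∈ s, a < b → P (b - a)) :
    #s ≤ #{q ∈ Ioc 0 Q | P q} + 1 := by
  rcases s.eq_empty_or_nonempty with rfl | hne
  · simp
  set m := s.max' hne
  have hm : m ∈ s := s.max'_mem hne
  have hmaps : ∀ q ∈ s.erase m, m - q ∈ ({q ∈ Ioc 0 Q | P q} : Finset ℕ) := by
    intro q hq
    have hqm : q < m := lt_of_le_of_ne (s.le_max' q (mem_of_mem_erase hq)) (ne_of_mem_erase hq)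
    have := hs m hm
    simp only [mem_filter, mem_Ioc]
    exact ⟨by omega, hP q (mem_of_mem_erase hq) m hm hqm⟩
  have hinj : Set.InjOn (m - ·) (s.erase m) := fun a ha b hb hab => by
    have := s.le_max' a (mem_of_mem_erase ha)
    have := s.le_max' b (mem_of_mem_erase hb)
    simp only at hab
    omega
  have := card_le_card_of_injOn _ hmaps hinj
  rw [card_erase_of_mem hm] at this
  omega

noncomputable def approxCount {l : ℕ} (x : Fin l → ℝ) (δ : ℝ) (Q : ℕ) : ℕ :=
  #((Ioc 0 Q).filter fun q : ℕ => distInt (fun i => (q : ℝ) * x i) < δ)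

/-- Dirichlet's pigeonhole argument: split the unit cube into `⌈δ⁻¹⌉₊ ^ l` cubes of side at most
`δ` and sort the fractional parts of `q x`, `0 ≤ q ≤ Q`, into them. -/
theorem lt_ceil_inv_pow_mul_approxCount_add_one {l : ℕ} (x : Fin l → ℝ) {δ : ℝ} (hδ : 0 < δ)
    (Q : ℕ) : Q < ⌈δ⁻¹⌉₊ ^ l * (approxCount x δ Q + 1) := by
  set M := ⌈δ⁻¹⌉₊
  set cell : ℕ → Fin l → ℕ := fun q i => ⌊Int.fract ((q : ℝ) * x i) / δ⌋₊
  have hcell : ∀ q ∈ range (Q + 1), cell q ∈ Fintype.piFinset fun _ => range M := by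
    intro q _
    simp only [Fintype.mem_piFinset, mem_range]
    intro i
    refine (Nat.floor_lt (div_nonneg (Int.fract_nonneg _) hδ.le)).2 ?_
    calc Int.fract ((q : ℝ) * x i) / δ < δ⁻¹ := by
          rw [div_lt_iff₀ hδ, inv_mul_cancel₀ hδ.ne']; exact Int.fract_lt_one _
      _ ≤ M := Nat.le_ceil _
  by_contra! hQ
  obtain ⟨c, -, hc⟩ := exists_lt_card_fiber_of_mul_lt_card_of_maps_to hcell
    (by simpa using Nat.lt_succ_of_le hQ)
  refine hc.not_ge (card_le_card_filter_Ioc_add_one (fun q hq => ?_) _ fun a ha b hb hab => ?_)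
  · exact Nat.lt_succ_iff.1 (mem_range.1 (mem_filter.1 hq).1)
  · have hsub : (fun i => ((b - a : ℕ) : ℝ) * x i) =
        (fun i => (b : ℝ) * x i) - fun i => (a : ℝ) * x i := by
      ext i; simp [Nat.cast_sub hab.le, sub_mul]
    rw [hsub]
    refine distInt_sub_lt_of_floor_fract_div_eq hδ fun i => ?_
    exact congrFun ((mem_filter.1 hb).2.trans (mem_filter.1 ha).2.symm) i

theorem pow_mul_le_two_pow_mul_approxCount_add_one {l : ℕ} (x : Fin l → ℝ) {δ : ℝ} (hδ : 0 < δ)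
    (hδ₁ : δ ≤ 1) (Q : ℕ) : (Q : ℝ) * δ ^ l ≤ 2 ^ l * (approxCount x δ Q + 1) := by
  have hM : (⌈δ⁻¹⌉₊ : ℝ) * δ ≤ 2 := by
    have := Nat.ceil_lt_add_one (inv_nonneg.2 hδ.le)
    have := one_le_inv_iff₀.2 ⟨hδ, hδ₁⟩
    calc (⌈δ⁻¹⌉₊ : ℝ) * δ ≤ (2 * δ⁻¹) * δ := by gcongr; linarith
      _ = 2 := by field_simp
  have hQ : (Q : ℝ) < ⌈δ⁻¹⌉₊ ^ l * (approxCount x δ Q + 1) := by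
    exact_mod_cast lt_ceil_inv_pow_mul_approxCount_add_one x hδ Q
  calc (Q : ℝ) * δ ^ l ≤ ⌈δ⁻¹⌉₊ ^ l * (approxCount x δ Q + 1) * δ ^ l := by gcongr
    _ = (⌈δ⁻¹⌉₊ * δ) ^ l * (approxCount x δ Q + 1) := by ring
    _ ≤ 2 ^ l * (approxCount x δ Q + 1) := by gcongr

theorem approxCount_le_add_card_filter_Ioc {l : ℕ} (x : Fin l → ℝ) {δ δ' : ℝ} (hδ : δ' ≤ δ)
    {Q Q' : ℕ} (hQ : Q ≤ Q') : approxCount x δ' Q' ≤ approxCount x δ Q +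
      #((Ioc Q Q').filter fun q : ℕ => distInt (fun i => (q : ℝ) * x i) < δ') := by
  rw [approxCount, ← Ioc_union_Ioc_eq_Ioc (Nat.zero_le Q) hQ, filter_union]
  refine (card_union_le _ _).trans (Nat.add_le_add_right (card_le_card fun q => ?_) _)
  simp only [mem_filter]
  exact And.imp_right (·.trans_le hδ)

noncomputable def approxWeight {l : ℕ} (x : Fin l → ℝ) (ψ : ℕ → ℝ) (k q : ℕ) : ℝ :=
  if distInt (fun i => (q : ℝ) * x i) < ψ q then ψ q ^ k else 0

theorem approxWeight_nonneg {l : ℕ} (x : Fin l → ℝ) {ψ : ℕ → ℝ} (hψ : ∀ q, 0 < ψ q) (k q : ℕ) :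
    0 ≤ approxWeight x ψ k q := by
  unfold approxWeight
  split_ifs
  exacts [pow_nonneg (hψ q).le k, le_rfl]

theorem pow_mul_approxCount_sub_le_sum_approxWeight {l : ℕ} (x : Fin l → ℝ) {ψ : ℕ → ℝ}
    (hψ : ∀ q, 0 < ψ q) (hψmono : Antitone ψ) (k : ℕ) {Q Q' : ℕ} (hQ : Q ≤ Q') :
    ψ Q' ^ k * ((approxCount x (ψ Q') Q' : ℝ) - approxCount x (ψ Q) Q) ≤
      ∑ q ∈ Ioc Q Q', approxWeight x ψ k q := by
  have hcount : (approxCount x (ψ Q') Q' : ℝ) - approxCount x (ψ Q) Q ≤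
      #((Ioc Q Q').filter fun q : ℕ => distInt (fun i => (q : ℝ) * x i) < ψ Q') := by
    rw [sub_le_iff_le_add']
    exact_mod_cast approxCount_le_add_card_filter_Ioc x (hψmono hQ) hQ
  calc ψ Q' ^ k * ((approxCount x (ψ Q') Q' : ℝ) - approxCount x (ψ Q) Q)
      ≤ ψ Q' ^ k *
          #((Ioc Q Q').filter fun q : ℕ => distInt (fun i => (q : ℝ) * x i) < ψ Q') :=
        mul_le_mul_of_nonneg_left hcount (pow_nonneg (hψ Q').le k)
    _ = ∑ q ∈ Ioc Q Q', if distInt (fun i => (q : ℝ) * x i) < ψ Q' then ψ Q' ^ k else 0 := by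
        rw [sum_ite, sum_const_zero, add_zero, sum_const, nsmul_eq_mul, mul_comm]
    _ ≤ ∑ q ∈ Ioc Q Q', approxWeight x ψ k q := by
        refine sum_le_sum fun q hq => ?_
        have hψq : ψ Q' ≤ ψ q := hψmono (mem_Ioc.1 hq).2
        split_ifs with h
        · rw [approxWeight, if_pos (h.trans_le hψq)]
          exact pow_le_pow_left₀ (hψ Q').le hψq k
        · exact approxWeight_nonneg x hψ k q

theorem summable_of_add_le_succ_of_le {u b : ℕ → ℝ} {C : ℝ} (hb : ∀ n, 0 ≤ b n)
    (hu : ∀ n, u n + b n ≤ u (n + 1)) (hC : ∀ n, u n ≤ C) : Summable b := by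
  refine summable_of_sum_range_le (c := C - u 0) hb fun n => ?_
  have htel : ∑ i ∈ range n, b i ≤ u n - u 0 := by
    induction n with
    | zero => simp
    | succ n ih => rw [sum_range_succ]; linarith [hu n]
  linarith [hC n]

theorem summable_two_pow_mul_pow_succ_of_counts {l k : ℕ} (hk : 0 < k) {δ A G : ℕ → ℝ} {c C : ℝ}
    (hc : 0 ≤ c) (hδ : ∀ N, 0 ≤ δ N) (hδmono : Antitone δ)
    (hA : ∀ N, 2 ^ N * δ N ^ l ≤ c * (A N + 1))
    (hG : ∀ N, δ (N + 1) ^ k * (A (N + 1) - A N) ≤ G (N + 1) - G N)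
    (hGC : ∀ N, G N ≤ C) : Summable fun N => (2 : ℝ) ^ N * δ (N + 1) ^ (l + k) := by
  have hlk : (0 : ℝ) ≤ l + k := by positivity
  -- an Abel summation of `hG`, with the boundary terms controlled by `hA`
  set u : ℕ → ℝ := fun N =>
    c * (l + k) * (G N - δ N ^ k * (A N + 1)) + k * 2 ^ N * δ N ^ (l + k)
  refine (summable_mul_left_iff (Nat.cast_ne_zero.2 hk.ne')).1
    (summable_of_add_le_succ_of_le (u := u) (C := c * (l + k) * C)
      (fun N => by positivity [hδ (N + 1)]) (fun N => ?_) fun N => ?_)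
  · have hba : δ (N + 1) ≤ δ N := hδmono N.le_succ
    have hk' : 0 ≤ δ N ^ k - δ (N + 1) ^ k := sub_nonneg.2 (pow_le_pow_left₀ (hδ _) hba k)
    have h₁ := mul_le_mul_of_nonneg_left (hG N) (mul_nonneg hc hlk)
    have h₂ := mul_le_mul_of_nonneg_left (hA N) (mul_nonneg hlk hk')
    have h₃ := mul_le_mul_of_nonneg_left (natCast_mul_pow_add_sub_pow_add_le l k (hδ _) hba)
      (pow_nonneg zero_le_two N : (0 : ℝ) ≤ 2 ^ N)
    simp only [u]
    linear_combination h₁ + h₂ + h₃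
  · have h₁ := mul_le_mul_of_nonneg_left (hGC N) (mul_nonneg hc hlk)
    have h₂ := mul_le_mul_of_nonneg_left (hA N) (mul_nonneg hlk (pow_nonneg (hδ N) k))
    have h₃ : (k : ℝ) * (2 ^ N * δ N ^ (l + k)) ≤ (l + k) * (2 ^ N * δ N ^ (l + k)) :=
      mul_le_mul_of_nonneg_right (by simp) (by positivity [hδ N])
    simp only [u, pow_add]
    linear_combination h₁ + h₂ + h₃

theorem approxWeight_mono {l : ℕ} (x : Fin l → ℝ) {φ ψ : ℕ → ℝ} (hφ : ∀ q, 0 < φ q)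
    (hφψ : ∀ q, φ q ≤ ψ q) (k q : ℕ) : approxWeight x φ k q ≤ approxWeight x ψ k q := by
  unfold approxWeight
  split_ifs with hφq hψq hψq
  · exact pow_le_pow_left₀ (hφ q).le (hφψ q) k
  · exact absurd (hφq.trans_le (hφψ q)) hψq
  · exact pow_nonneg ((hφ q).le.trans (hφψ q)) k
  · exact le_rfl

theorem summable_pow_of_summable_approxWeight {l k : ℕ} (hk : 0 < k) (x : Fin l → ℝ)
    {ψ : ℕ → ℝ} (hψ : ∀ q, 0 < ψ q) (hψ₁ : ∀ q, ψ q ≤ 1) (hψmono : Antitone ψ)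
    (hS : Summable (approxWeight x ψ k)) : Summable fun q => ψ q ^ (l + k) := by
  have hdyadic : Monotone fun N : ℕ => 2 ^ N := pow_right_mono₀ one_le_two
  have hcond : Summable fun N => (2 : ℝ) ^ N * ψ (2 ^ (N + 1)) ^ (l + k) := by
    refine summable_two_pow_mul_pow_succ_of_counts hk (δ := fun N => ψ (2 ^ N))
      (A := fun N => approxCount x (ψ (2 ^ N)) (2 ^ N))
      (G := fun N => ∑ q ∈ Ioc 0 (2 ^ N), approxWeight x ψ k q) (C := ∑' q, approxWeight x ψ k q)
      (by positivity : (0 : ℝ) ≤ 2 ^ l) (fun N => (hψ _).le) (hψmono.comp_monotone hdyadic)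
      (fun N => ?_) (fun N => ?_) fun N => ?_
    · exact_mod_cast pow_mul_le_two_pow_mul_approxCount_add_one x (hψ _) (hψ₁ _) (2 ^ N)
    · rw [← sum_Ioc_consecutive _ (Nat.zero_le _) (hdyadic N.le_succ), add_sub_cancel_left]
      exact pow_mul_approxCount_sub_le_sum_approxWeight x hψ hψmono k (hdyadic N.le_succ)
    · exact hS.sum_le_tsum _ fun q _ => approxWeight_nonneg x hψ k q
  rw [← summable_condensed_iff_of_nonneg (fun q => pow_nonneg (hψ q).le _)
    fun m n _ hmn => pow_le_pow_left₀ (hψ n).le (hψmono hmn) _, ← summable_nat_add_iff 1]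
  exact (hcond.mul_left 2).congr fun N => by ring

theorem Summable.of_min_one_pow {ι : Type*} {f : ι → ℝ} {d : ℕ}
    (h : Summable fun i => min (f i) 1 ^ d) : Summable fun i => f i ^ d := by
  refine h.congr_cofinite ?_
  filter_upwards [h.tendsto_cofinite_zero.eventually (gt_mem_nhds one_pos)] with i hi
  rw [min_eq_left]
  by_contra! hf
  rw [min_eq_right hf.le, one_pow] at hi
  exact hi.false

theorem stmt_3_general (l k d : ℕ) (hk : 1 ≤ k) (hd : d = l + k)
    (x : Fin l → ℝ) (ψ : ℕ → ℝ) (hψpos : ∀ q, 0 < ψ q) (hψmono : Antitone ψ)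
    (hdiv : ¬ Summable fun q : ℕ => ψ q ^ d) :
    ¬ Summable fun q : ℕ =>
      if distInt (fun i => (q : ℝ) * x i) < ψ q then ψ q ^ k else 0 := by
  subst hd
  intro hS
  have hφ : ∀ q, 0 < min (ψ q) 1 := fun q => lt_min (hψpos q) one_pos
  refine hdiv (Summable.of_min_one_pow (summable_pow_of_summable_approxWeight hk x hφ
    (fun q => min_le_right _ _) (fun a b hab => min_le_min_right 1 (hψmono hab)) ?_))
  exact Summable.of_nonneg_of_le (approxWeight_nonneg x hφ k)
    (approxWeight_mono x hφ (fun q => min_le_left _ _) k) (hS : Summable (approxWeight x ψ k))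

theorem stmt_3 (l k d : ℕ) (hl : 1 ≤ l) (hk : 1 ≤ k) (hd : d = l + k)
    (x : Fin l → ℝ) (ψ : ℕ → ℝ) (hψpos : ∀ q, 0 < ψ q) (hψmono : Antitone ψ)
    (hdiv : ¬ Summable fun q : ℕ => ψ q ^ d) :
    ¬ Summable fun q : ℕ =>
      if distInt (fun i => (q : ℝ) * x i) < ψ q then ψ q ^ k else 0 :=
  stmt_3_general l k d hk hd x ψ hψpos hψmono hdiv
end

section
/- Let ψ : N → R^+ be nonincreasing with ∑_{q∈N} ψ(q)^d divergent, where all values ψ(q) are of the form 2^{−m} for some m ∈ N. Then for any x ∈ R^ℓ (with ℓ + k = d, k ≥ 1), ∑_{m∈N} ψ(2^m)^k · #{2^{m−1} < q ≤ 2^m : ‖qx‖ < ψ(2^m)} = ∞. -/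
/-!
Dirichlet's pigeonhole argument in cells of side `2⁻ᶜ = ψ(2^M)` yields at least
`2^M ψ(2^M)^ℓ - 1` integers `0 < q ≤ 2^M` with `‖qx‖ < ψ(2^M)`, so the cumulative block counts
`B_M = N_0 + ⋯ + N_M` satisfy `2^M ψ(2^M)^ℓ ≤ B_M + 2`. Abel summation against the nonincreasing
weights `ψ(2^m)^k` bounds the partial sums of the series from below by
`∑_{m<n} (ψ(2^m)^k - ψ(2^{m+1})^k) 2^m ψ(2^m)^ℓ + 2^n ψ(2^n)^d` up to a constant. Since `ψ` is
dyadic, at each step `ψ(2^m)` either stays put, and then `2^m ψ(2^m)^d` doubles, or at least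
halves, and then the difference term is at least half of `2^m ψ(2^m)^d`. Hence this lower bound
dominates a quarter of `∑_{m<n} 2^m ψ(2^m)^d`, which diverges by Cauchy condensation.
-/

open scoped Classical

open Finset

theorem distInt_le {l : ℕ} (x : Fin l → ℝ) (p : Fin l → ℤ) :
    distInt x ≤ ‖x - fun i => (p i : ℝ)‖ :=
  ciInf_le ⟨0, fun _ ⟨_, hq⟩ => hq ▸ norm_nonneg _⟩ p

theorem distInt_sub_lt_of_floor_fract_eq {l n : ℕ} (hn : 0 < n) {y y' : Fin l → ℝ}
    (h : ∀ i, ⌊Int.fract (y i) * n⌋₊ = ⌊Int.fract (y' i) * n⌋₊) :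
    distInt (y - y') < (n : ℝ)⁻¹ := by
  have hn' : (0 : ℝ) < n := Nat.cast_pos.2 hn
  refine (distInt_le _ fun i => ⌊y i⌋ - ⌊y' i⌋).trans_lt
    ((pi_norm_lt_iff (inv_pos.2 hn')).2 fun i => ?_)
  have hfloor : ⌊Int.fract (y i) * n⌋ = ⌊Int.fract (y' i) * n⌋ := by
    rw [← Int.natCast_floor_eq_floor (by positivity), ← Int.natCast_floor_eq_floor (by positivity),
      h i]
  have hlt := Int.abs_sub_lt_one_of_floor_eq_floor hfloor
  rw [← sub_mul, abs_mul, abs_of_pos hn', ← lt_div_iff₀ hn', one_div] at hlt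
  have heq : (y - y' - fun i => ((⌊y i⌋ - ⌊y' i⌋ : ℤ) : ℝ)) i =
      Int.fract (y i) - Int.fract (y' i) := by
    simp only [Pi.sub_apply, Int.cast_sub, Int.fract]
    ring
  rwa [heq, Real.norm_eq_abs]

theorem card_le_one_add_card_filter_distInt_lt {l n : ℕ} (hn : 0 < n) (x : Fin l → ℝ)
    {Q : ℕ} {S : Finset ℕ} (hSQ : ∀ q ∈ S, q ≤ Q)
    (hcell : ∀ q ∈ S, ∀ q' ∈ S, ∀ i,
      ⌊Int.fract ((q : ℝ) * x i) * n⌋₊ = ⌊Int.fract ((q' : ℝ) * x i) * n⌋₊) :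
    #S ≤ 1 + #((Ioc 0 Q).filter fun q : ℕ => distInt (fun i => (q : ℝ) * x i) < (n : ℝ)⁻¹) := by
  rcases S.eq_empty_or_nonempty with rfl | hS
  · simp
  set q₀ := S.min' hS
  have hmaps : ∀ q ∈ S.erase q₀, q - q₀ ∈
      (Ioc 0 Q).filter fun q : ℕ => distInt (fun i => (q : ℝ) * x i) < (n : ℝ)⁻¹ := by
    intro q hq
    obtain ⟨hne, hqS⟩ := mem_erase.1 hq
    have hlt : q₀ < q := lt_of_le_of_ne (S.min'_le q hqS) (Ne.symm hne)
    refine mem_filter.2 ⟨mem_Ioc.2 ⟨by omega, by have := hSQ q hqS; omega⟩, ?_⟩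
    have hsub : (fun i => ((q - q₀ : ℕ) : ℝ) * x i) =
        (fun i => (q : ℝ) * x i) - fun i => (q₀ : ℝ) * x i := by
      ext i
      simp [Nat.cast_sub hlt.le, sub_mul]
    rw [hsub]
    exact distInt_sub_lt_of_floor_fract_eq hn (hcell q hqS q₀ (S.min'_mem hS))
  have hinj : Set.InjOn (· - q₀) (S.erase q₀ : Set ℕ) := fun a ha b hb hab => by
    have := S.min'_le a (mem_of_mem_erase ha)
    have := S.min'_le b (mem_of_mem_erase hb)
    simp only at hab
    omega
  have hcard := card_le_card_of_injOn _ hmaps hinj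
  rw [card_erase_of_mem (S.min'_mem hS)] at hcard
  omega

theorem le_card_filter_distInt_lt {l : ℕ} (x : Fin l → ℝ) {n : ℕ} (hn : 0 < n) (Q : ℕ) :
    (Q + 1 : ℝ) * ((n : ℝ)⁻¹) ^ l ≤ 1 + (#((Ioc 0 Q).filter fun q : ℕ =>
      distInt (fun i => (q : ℝ) * x i) < (n : ℝ)⁻¹) : ℝ) := by
  have : NeZero n := ⟨hn.ne'⟩
  let cell : ℕ → Fin l → Fin n := fun q i =>
    ⟨⌊Int.fract ((q : ℝ) * x i) * n⌋₊, (Nat.floor_lt (by positivity)).2 <| by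
      simpa using mul_lt_mul_of_pos_right (Int.fract_lt_one ((q : ℝ) * x i))
        (Nat.cast_pos.2 hn : (0 : ℝ) < n)⟩
  obtain ⟨c, -, hc⟩ := exists_le_card_fiber_of_nsmul_le_card_of_maps_to (s := range (Q + 1))
    (f := cell) (b := (Q + 1 : ℝ) / n ^ l) (fun _ _ => mem_univ _) univ_nonempty
    (by rw [card_univ, Fintype.card_fun, Fintype.card_fin, Fintype.card_fin, card_range,
      nsmul_eq_mul, Nat.cast_pow, mul_div_cancel₀ _ (by positivity)]
        exact (Nat.cast_succ Q).ge)
  have hfiber := card_le_one_add_card_filter_distInt_lt hn x (Q := Q)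
    (S := {q ∈ range (Q + 1) | cell q = c})
    (fun q hq => Nat.lt_succ_iff.1 (mem_range.1 (mem_filter.1 hq).1))
    fun q hq q' hq' i =>
      congrArg Fin.val (congrFun ((mem_filter.1 hq).2.trans (mem_filter.1 hq').2.symm) i)
  rw [inv_pow, ← div_eq_mul_inv]
  exact hc.trans (by exact_mod_cast hfiber)

theorem eq_or_pow_le_half_of_le_of_two_zpow {x y : ℝ} (hx : ∃ m : ℤ, x = 2 ^ m)
    (hy : ∃ n : ℤ, y = 2 ^ n) (h : x ≤ y) {k : ℕ} (hk : 1 ≤ k) : x = y ∨ x ^ k ≤ y ^ k / 2 := by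
  obtain ⟨m, rfl⟩ := hx
  obtain ⟨n, rfl⟩ := hy
  rcases ((zpow_le_zpow_iff_right₀ one_lt_two).1 h).eq_or_lt with rfl | hlt
  · exact Or.inl rfl
  right
  have hhalf : (2 : ℝ) ^ m ≤ 2 ^ n / 2 := by
    rw [div_eq_mul_inv, ← zpow_sub_one₀ (two_ne_zero (α := ℝ))]
    exact zpow_le_zpow_right₀ one_le_two (by omega)
  calc ((2 : ℝ) ^ m) ^ k ≤ (2 ^ n / 2) ^ k := pow_le_pow_left₀ (by positivity) hhalf k
    _ = ((2 : ℝ) ^ n) ^ k / 2 ^ k := div_pow _ _ _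
    _ ≤ ((2 : ℝ) ^ n) ^ k / 2 :=
      div_le_div_of_nonneg_left (by positivity) two_pos (le_self_pow₀ one_le_two (by omega))

/-- The `1 +` accounts for `q = 1`, which lies in no block: `2 ^ (0 - 1) = 1` in `ℕ`. -/
theorem card_filter_Ioc_two_pow_le (p : ℕ → ℕ → Prop) [∀ m, DecidablePred (p m)]
    (hp : ∀ q, Antitone (p · q)) (M : ℕ) :
    #{q ∈ Ioc 0 (2 ^ M) | p M q} ≤
      1 + ∑ m ∈ range (M + 1), #{q ∈ Ioc (2 ^ (m - 1)) (2 ^ m) | p m q} := by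
  induction M with
  | zero => exact (card_filter_le _ _).trans (by simp)
  | succ M ih =>
    rw [← Ioc_union_Ioc_eq_Ioc (Nat.zero_le _) (Nat.pow_le_pow_right two_pos M.le_succ),
      filter_union, sum_range_succ, ← add_assoc]
    refine (card_union_le _ _).trans (Nat.add_le_add_right ?_ _)
    exact (card_le_card (monotone_filter_right _ fun q _ => hp q M.le_succ)).trans ih

theorem two_pow_mul_pow_le_sum_card_add_two {l : ℕ} (x : Fin l → ℝ) {δ : ℕ → ℝ}
    (hδ : Antitone δ) {M : ℕ} (hδM : ∃ n : ℕ, 0 < n ∧ δ M = (n : ℝ)⁻¹) :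
    2 ^ M * δ M ^ l ≤ ∑ m ∈ range (M + 1), (#((Ioc (2 ^ (m - 1)) (2 ^ m)).filter fun q : ℕ =>
      distInt (fun i => (q : ℝ) * x i) < δ m) : ℝ) + 2 := by
  obtain ⟨n, hn, hδn⟩ := hδM
  have hpig := le_card_filter_distInt_lt x hn (2 ^ M)
  rw [← hδn] at hpig
  push_cast at hpig
  have hblocks : (#((Ioc 0 (2 ^ M)).filter fun q : ℕ =>
      distInt (fun i => (q : ℝ) * x i) < δ M) : ℝ) ≤ 1 + ∑ m ∈ range (M + 1),
        (#((Ioc (2 ^ (m - 1)) (2 ^ m)).filter fun q : ℕ =>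
          distInt (fun i => (q : ℝ) * x i) < δ m) : ℝ) := by
    exact_mod_cast card_filter_Ioc_two_pow_le (fun m q => distInt (fun i => (q : ℝ) * x i) < δ m)
      (fun q a b hab h => h.trans_le (hδ hab)) M
  have hδl : 0 ≤ δ M ^ l := by rw [hδn]; positivity
  linarith

theorem sum_range_add_le_of_two_mul_le {u v : ℕ → ℝ} (h : ∀ j, 2 * u j ≤ v j + u (j + 1))
    (n : ℕ) : ∑ j ∈ range n, u j + u 0 ≤ ∑ j ∈ range n, v j + u n := by
  induction n with
  | zero => simp
  | succ n ih =>
    rw [sum_range_succ, sum_range_succ]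
    linarith [h n]

theorem sum_range_sub_mul_add_le {a w N : ℕ → ℝ} (ha : Antitone a) (ha0 : ∀ m, 0 ≤ a m) {C : ℝ}
    (hw : ∀ m, w m ≤ ∑ i ∈ range (m + 1), N i + C) (n : ℕ) :
    ∑ m ∈ range n, (a m - a (m + 1)) * w m + a n * w n ≤
      ∑ m ∈ range (n + 1), a m * N m + a 0 * C := by
  have hparts := sum_range_by_parts a N (n + 1)
  simp only [smul_eq_mul, add_tsub_cancel_right] at hparts
  have htel : ∑ m ∈ range n, (a m - a (m + 1)) = a 0 - a n := sum_range_sub' a n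
  have hterm : ∀ m ∈ range n, (a m - a (m + 1)) * w m ≤
      (a m - a (m + 1)) * (∑ i ∈ range (m + 1), N i) + (a m - a (m + 1)) * C := fun m _ => by
    rw [← mul_add]
    exact mul_le_mul_of_nonneg_left (hw m) (sub_nonneg.2 (ha m.le_succ))
  have hlast : a n * w n ≤ a n * (∑ i ∈ range (n + 1), N i) + a n * C := by
    rw [← mul_add]; exact mul_le_mul_of_nonneg_left (hw n) (ha0 n)
  have hsum := sum_le_sum hterm
  rw [sum_add_distrib, ← sum_mul, htel] at hsum
  have hneg : ∑ m ∈ range n, (a m - a (m + 1)) * ∑ i ∈ range (m + 1), N i =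
      -∑ m ∈ range n, (a (m + 1) - a m) * ∑ i ∈ range (m + 1), N i := by
    rw [← sum_neg_distrib]; exact sum_congr rfl fun m _ => by ring
  rw [hparts]
  linarith

theorem two_mul_mul_le_of_eq_or_le_half {a w : ℕ → ℝ} (ha : ∀ m, 0 ≤ a m) (hw : ∀ m, 0 ≤ w m)
    {j : ℕ} (hj : (a (j + 1) = a j ∧ w (j + 1) = 2 * w j) ∨ a (j + 1) ≤ a j / 2) :
    2 * (a j * w j) ≤ 4 * ((a j - a (j + 1)) * w j) + a (j + 1) * w (j + 1) := by
  rcases hj with ⟨ha_eq, hw_eq⟩ | hhalf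
  · rw [ha_eq, hw_eq, sub_self, zero_mul, mul_zero, zero_add]
    exact le_of_eq (by ring)
  · nlinarith [mul_nonneg (ha (j + 1)) (hw (j + 1)), mul_le_mul_of_nonneg_right hhalf (hw j)]

theorem summable_mul_of_summable_mul_of_le_sum_range {a w N : ℕ → ℝ} (ha : ∀ m, 0 ≤ a m)
    (hw : ∀ m, 0 ≤ w m)
    (hstep : ∀ j, (a (j + 1) = a j ∧ w (j + 1) = 2 * w j) ∨ a (j + 1) ≤ a j / 2) {C : ℝ}
    (hwN : ∀ m, w m ≤ ∑ i ∈ range (m + 1), N i + C) (hN : ∀ m, 0 ≤ N m)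
    (hS : Summable fun m => a m * N m) : Summable fun m => a m * w m := by
  have hanti : Antitone a := antitone_nat_of_succ_le fun j => by
    rcases hstep j with ⟨h, -⟩ | h
    · exact h.le
    · linarith [ha j]
  refine summable_of_sum_range_le (c := 4 * (∑' m, a m * N m + a 0 * C))
    (fun m => mul_nonneg (ha m) (hw m)) fun n => ?_
  have hruns := sum_range_add_le_of_two_mul_le (u := fun m => a m * w m)
    (v := fun m => 4 * ((a m - a (m + 1)) * w m))
    (fun j => two_mul_mul_le_of_eq_or_le_half ha hw (hstep j)) n
  have habel := sum_range_sub_mul_add_le hanti ha hwN n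
  have htsum : ∑ m ∈ range (n + 1), a m * N m ≤ ∑' m, a m * N m :=
    hS.sum_le_tsum _ fun m _ => mul_nonneg (ha m) (hN m)
  rw [← mul_sum] at hruns
  nlinarith [mul_nonneg (ha 0) (hw 0), mul_nonneg (ha n) (hw n)]

theorem stmt_4 (l k d : ℕ) (hk : 1 ≤ k) (hd : d = l + k)
    (ψ : ℕ → ℝ) (hψpos : ∀ q, 0 < ψ q) (hψmono : Antitone ψ)
    (hdyadic : ∀ q, ∃ m : ℕ, ψ q = (2 : ℝ) ^ (-(m : ℤ)))
    (hdiv : ¬ Summable fun q : ℕ => ψ q ^ d) (x : Fin l → ℝ) :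
    ¬ Summable fun m : ℕ =>
      ψ (2 ^ m) ^ k *
        (((Finset.Ioc (2 ^ (m - 1)) (2 ^ m)).filter fun q : ℕ =>
          distInt (fun i => (q : ℝ) * x i) < ψ (2 ^ m)).card : ℝ) := by
  intro hS
  set δ : ℕ → ℝ := fun m => ψ (2 ^ m) with hδ
  have hδanti : Antitone δ := fun a b h => hψmono (Nat.pow_le_pow_right two_pos h)
  have hδinv : ∀ m, ∃ n : ℕ, 0 < n ∧ δ m = (n : ℝ)⁻¹ := fun m => by
    obtain ⟨c, hc⟩ := hdyadic (2 ^ m)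
    exact ⟨2 ^ c, by positivity, by simp [hδ, hc]⟩
  have hδzpow : ∀ m, ∃ c : ℤ, δ m = 2 ^ c := fun m => by
    obtain ⟨c, hc⟩ := hdyadic (2 ^ m)
    exact ⟨-c, hc⟩
  have hstep : ∀ j, (δ (j + 1) ^ k = δ j ^ k ∧ 2 ^ (j + 1) * δ (j + 1) ^ l = 2 * (2 ^ j * δ j ^ l))
      ∨ δ (j + 1) ^ k ≤ δ j ^ k / 2 := fun j => by
    rcases eq_or_pow_le_half_of_le_of_two_zpow (hδzpow _) (hδzpow _) (hδanti j.le_succ) hk with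
      heq | hhalf
    · exact Or.inl ⟨by rw [heq], by rw [heq]; ring⟩
    · exact Or.inr hhalf
  have hu := summable_mul_of_summable_mul_of_le_sum_range (a := fun m => δ m ^ k)
    (w := fun m => 2 ^ m * δ m ^ l) (fun m => pow_nonneg (hψpos _).le k)
    (fun m => mul_nonneg (by positivity) (pow_nonneg (hψpos _).le l)) hstep
    (fun M => two_pow_mul_pow_le_sum_card_add_two x hδanti (hδinv M))
    (fun m => Nat.cast_nonneg _) hS
  refine hdiv ((summable_condensed_iff_of_nonneg (fun q => pow_nonneg (hψpos q).le d)
    fun m n _ hmn => pow_le_pow_left₀ (hψpos n).le (hψmono hmn) d).1 ?_)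
  convert hu using 2 with m
  rw [hd, pow_add]
  ring
end

section
/- Khintchine's transference principle (one direction): Let x ∈ R^d with d ≥ 1. If ω_D(x) > 0, where ω_D(x) = sup{ω > 0 : ‖⟨n,x⟩‖ ≤ |n|_∞^{−(d+ω)} for infinitely many n ∈ Z^d \ {0}}, then ω_S(x) > 0, where ω_S(x) = sup{ω > 0 : ‖qx‖ ≤ q^{−(1+ω)/d} for infinitely many q ∈ N}. More precisely, ω_S(x) ≥ ω_D(x)/(d² + (d−1)ω_D(x)). -/
open scoped Classical ENNReal

/-- Distance from `t ∈ ℝ` to the nearest integer. -/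
noncomputable def distZ (t : ℝ) : ℝ := ⨅ p : ℤ, |t - (p : ℝ)|

/-- `ω_D(x) = sup {ω > 0 : ‖⟨n,x⟩‖ ≤ |n|_∞^{-(d+ω)} for infinitely many n ∈ ℤ^d \ {0}}`,
valued in `ℝ≥0∞` (sup of the empty set is `0`, unbounded sets give `∞`). -/
noncomputable def omegaD {d : ℕ} (x : Fin d → ℝ) : ℝ≥0∞ :=
  ⨆ ω ∈ {ω : ℝ | 0 < ω ∧
    {n : Fin d → ℤ | n ≠ 0 ∧
      distZ (∑ i, (n i : ℝ) * x i) ≤ ‖fun i => ((n i : ℝ))‖ ^ (-((d : ℝ) + ω))}.Infinite},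
    ENNReal.ofReal ω

/-- `ω_S(x) = sup {ω > 0 : ‖qx‖ ≤ q^{-(1+ω)/d} for infinitely many q ∈ ℕ}`. -/
noncomputable def omegaS {d : ℕ} (x : Fin d → ℝ) : ℝ≥0∞ :=
  ⨆ ω ∈ {ω : ℝ | 0 < ω ∧
    {q : ℕ | 0 < q ∧
      distInt (fun i => (q : ℝ) * x i) ≤ (q : ℝ) ^ (-((1 + ω) / d))}.Infinite},
    ENNReal.ofReal ω

/-!
Take `n ≠ 0` with `‖⟨n, x⟩‖ ≤ X ^ (-(d + ω))`, where `X = |n|_∞ = |n j|`, and let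
`T = X ^ ((d + ω) / d)`. A box principle in the coordinates `q x i` (`i ≠ j`), with mesh `1 / T`,
and in one auxiliary coordinate yields `0 < q ≤ 2 ^ d T ^ (d - 1) X` and `p ∈ ℤ^d` with
`|q x i - p i| ≤ 1 / T` for `i ≠ j` and `⟨n, q x - p⟩ = q (⟨n, x⟩ - b)` exactly. As `n j` is the
largest coefficient of this linear form, also `|q x j - p j| ≪ 1 / T`. In terms of `X`,
`‖q x‖ ≪ X ^ (-(d + ω) / d)` while `q ≪ X ^ ((d² + (d - 1) ω) / d)`, so
`‖q x‖ ≤ q ^ (-(1 + ω') / d)` for all `ω' < ω / (d² + (d - 1) ω)` once `X` is large. Such `q`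
are infinitely many: otherwise some `q x` lies in `ℤ^d`, and then every multiple of `q` qualifies.
-/

lemma distZ_eq_abs_sub_round (t : ℝ) : distZ t = |t - round t| :=
  le_antisymm (ciInf_le ⟨0, by rintro _ ⟨p, rfl⟩; positivity⟩ _) (le_ciInf (round_le t))

lemma distInt_le_norm_sub {l : ℕ} (y : Fin l → ℝ) (p : Fin l → ℤ) :
    distInt y ≤ ‖y - fun i => (p i : ℝ)‖ :=
  ciInf_le ⟨0, by rintro _ ⟨p, rfl⟩; positivity⟩ p

lemma distInt_nonneg {l : ℕ} (y : Fin l → ℝ) : 0 ≤ distInt y :=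
  Real.iInf_nonneg fun _ => norm_nonneg _

lemma distInt_natCast_mul_le {l : ℕ} (k : ℕ) (y : Fin l → ℝ) :
    distInt (fun i => (k : ℝ) * y i) ≤ k * distInt y := by
  refine (le_ciInf fun p => ?_).trans_eq (Real.mul_iInf_of_nonneg k.cast_nonneg _).symm
  calc distInt (fun i => (k : ℝ) * y i)
      ≤ ‖(fun i => (k : ℝ) * y i) - fun i => ((k * p i : ℤ) : ℝ)‖ := distInt_le_norm_sub _ _
    _ = ‖(k : ℝ) • (y - fun i => (p i : ℝ))‖ := by congr 1; ext i; push_cast; simp [mul_sub]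
    _ = k * ‖y - fun i => (p i : ℝ)‖ := by rw [norm_smul, Real.norm_natCast]

lemma infinite_setOf_distInt_le {l : ℕ} (x : Fin l → ℝ) {φ : ℕ → ℝ} (hφ : ∀ q, 0 ≤ φ q)
    (h : ∀ c > 0, ∃ q : ℕ, 0 < q ∧ distInt (fun i => (q : ℝ) * x i) ≤ φ q ∧
      distInt (fun i => (q : ℝ) * x i) < c) :
    {q : ℕ | 0 < q ∧ distInt (fun i => (q : ℝ) * x i) ≤ φ q}.Infinite := by
  set B := {q : ℕ | 0 < q ∧ distInt (fun i => (q : ℝ) * x i) ≤ φ q}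
  intro hfin
  obtain ⟨q₁, hq₁, hq₁φ, -⟩ := h 1 one_pos
  obtain ⟨q, ⟨hq, -⟩, hqmin⟩ := Set.exists_min_image B (fun q => distInt (fun i => (q : ℝ) * x i))
    hfin ⟨q₁, hq₁, hq₁φ⟩
  have hq0 : distInt (fun i => (q : ℝ) * x i) = 0 := by
    refine le_antisymm (le_of_forall_pos_lt_add fun c hc => ?_) (distInt_nonneg _)
    obtain ⟨q', hq', hq'φ, hq'c⟩ := h c hc
    simpa using (hqmin q' ⟨hq', hq'φ⟩).trans_lt hq'c
  have hmul : ∀ k : ℕ, (k + 1) * q ∈ B := fun k => by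
    refine ⟨by positivity, ?_⟩
    calc distInt (fun i => (((k + 1) * q : ℕ) : ℝ) * x i)
        ≤ ((k + 1 : ℕ) : ℝ) * distInt (fun i => (q : ℝ) * x i) := by
          simpa only [Nat.cast_mul, mul_assoc] using distInt_natCast_mul_le (k + 1) _
      _ ≤ φ ((k + 1) * q) := by rw [hq0, mul_zero]; exact hφ _
  exact Set.infinite_of_injective_forall_mem (fun a b hab => by simpa [hq.ne'] using hab) hmul hfin

lemma exists_lt_le_prod_abs_fract_sub_lt {ι : Type*} [Fintype ι] (g : ℕ → ι → ℝ) (m : ι → ℕ)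
    (hm : ∀ i, 0 < m i) :
    ∃ t₁ t₂ : ℕ, t₁ < t₂ ∧ t₂ ≤ ∏ i, m i ∧
      ∀ i, |Int.fract (g t₂ i) - Int.fract (g t₁ i)| < 1 / m i := by
  have hbox : ∀ t i, ⌊m i * Int.fract (g t i)⌋₊ < m i := fun t i =>
    (Nat.floor_lt (by positivity)).2 <|
      mul_lt_of_lt_one_right (by exact_mod_cast hm i) (Int.fract_lt_one _)
  let box : Fin (∏ i, m i + 1) → (i : ι) → Fin (m i) := fun t i => ⟨_, hbox t i⟩
  obtain ⟨t, t', hne, heq⟩ := Fintype.exists_ne_map_eq_of_card_lt box (by simp)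
  wlog hlt : t < t' generalizing t t'
  · exact this t' t hne.symm heq.symm (lt_of_le_of_ne (not_lt.1 hlt) hne.symm)
  refine ⟨t, t', hlt, Nat.lt_succ_iff.1 t'.2, fun i => ?_⟩
  have hfloor : ⌊m i * Int.fract (g t' i)⌋ = ⌊m i * Int.fract (g t i)⌋ := by
    rw [← Int.natCast_floor_eq_floor (by positivity), ← Int.natCast_floor_eq_floor (by positivity)]
    exact_mod_cast congrArg (fun b => (b i : ℕ)) heq.symm
  have hmi : (0 : ℝ) < m i := by exact_mod_cast hm i
  rw [lt_div_iff₀ hmi, ← abs_of_pos hmi, ← abs_mul, sub_mul, mul_comm, mul_comm (Int.fract _)]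
  exact Int.abs_sub_lt_one_of_floor_eq_floor hfloor

lemma exists_approx_of_linear_form {ι : Type*} [Fintype ι] [DecidableEq ι] (x : ι → ℝ)
    (n : ι → ℤ) (j : ι) (hnj : n j ≠ 0) {m M : ℕ} (hm : 0 < m) (hM : 0 < M) :
    ∃ (q : ℕ) (p : ι → ℤ), 0 < q ∧ q ≤ m ^ (Fintype.card ι - 1) * M ∧
      (∀ i ≠ j, |q * x i - p i| < 1 / m) ∧
      |∑ i, n i * (q * x i - p i)| < |(n j : ℝ)| / M := by
  -- Boxing `y t` in place of `t * x j` gives `⟨n, q x - p⟩ = n j * (fract (y t₂) - fract (y t₁))`.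
  let r : ℕ → ι → ℤ := fun t i => if i = j then 0 else ⌊t * x i⌋
  let y : ℕ → ℝ := fun t => (∑ i, n i * (t * x i - r t i)) / n j
  let g : ℕ → ι → ℝ := fun t i => if i = j then y t else t * x i
  obtain ⟨t₁, t₂, hlt, hle, hclose⟩ := exists_lt_le_prod_abs_fract_sub_lt g
    (Function.update (fun _ => m) j M) fun i => by
      rcases eq_or_ne i j with rfl | hi <;> simp [*]
  have hprod : ∏ i, Function.update (fun _ => m) j M i = m ^ (Fintype.card ι - 1) * M := by
    rw [Finset.prod_update_of_mem (Finset.mem_univ j), Finset.prod_const, mul_comm,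
      Finset.card_sdiff, Finset.card_univ]
    simp
  refine ⟨t₂ - t₁, fun i => ⌊g t₂ i⌋ - ⌊g t₁ i⌋, by omega, by omega, fun i hi => ?_, ?_⟩
  · have := hclose i
    simp only [g, hi, if_false, Function.update_of_ne hi, Int.fract] at this ⊢
    rw [Nat.cast_sub hlt.le]; convert this using 2; push_cast; ring
  · have hnj' : (n j : ℝ) ≠ 0 := by exact_mod_cast hnj
    have hterm : ∀ i, ((t₂ - t₁ : ℕ) : ℝ) * x i - ((⌊g t₂ i⌋ - ⌊g t₁ i⌋ : ℤ) : ℝ) =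
        (t₂ * x i - r t₂ i) - (t₁ * x i - r t₁ i) -
          if i = j then ((⌊y t₂⌋ - ⌊y t₁⌋ : ℤ) : ℝ) else 0 := fun i => by
      rcases eq_or_ne i j with rfl | hi
      · simp only [g, r, if_true, Nat.cast_sub hlt.le, Int.cast_zero]; ring
      · simp only [g, r, hi, if_false, Nat.cast_sub hlt.le, Int.cast_sub]; ring
    have hy : ∀ t : ℕ, (n j : ℝ) * y t = ∑ i, n i * (t * x i) - ∑ i, n i * (r t i : ℝ) :=
      fun t => by rw [mul_div_cancel₀ _ hnj']; simp only [mul_sub, Finset.sum_sub_distrib]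
    have hsum : ∑ i, (n i : ℝ) * (((t₂ - t₁ : ℕ) : ℝ) * x i - ((⌊g t₂ i⌋ - ⌊g t₁ i⌋ : ℤ) : ℝ)) =
        n j * (Int.fract (y t₂) - Int.fract (y t₁)) := by
      simp only [hterm, mul_sub, Finset.sum_sub_distrib, mul_ite, mul_zero,
        Finset.sum_ite_eq', Finset.mem_univ, if_true, Int.fract, hy]
      push_cast; ring
    have := hclose j
    simp only [g, if_true, Function.update_self] at this
    rw [hsum, abs_mul]
    calc |(n j : ℝ)| * |Int.fract (y t₂) - Int.fract (y t₁)| < |(n j : ℝ)| * (1 / M) :=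
          mul_lt_mul_of_pos_left this (abs_pos.2 hnj')
      _ = |(n j : ℝ)| / M := by ring

lemma abs_le_of_abs_sum_mul_le {ι : Type*} [Fintype ι] [DecidableEq ι] {a v : ι → ℝ} {j : ι}
    (hmax : ∀ i, |a i| ≤ |a j|) (haj : a j ≠ 0) {δ η : ℝ} (hv : ∀ i ≠ j, |v i| ≤ δ)
    (hη : |∑ i, a i * v i| ≤ η) :
    |v j| ≤ η / |a j| + (Fintype.card ι - 1) * δ := by
  have hsplit : a j * v j = ∑ i, a i * v i - ∑ i ∈ Finset.univ.erase j, a i * v i := by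
    rw [← Finset.add_sum_erase _ _ (Finset.mem_univ j)]; ring
  have hrest : |∑ i ∈ Finset.univ.erase j, a i * v i| ≤ (Fintype.card ι - 1) * (|a j| * δ) :=
    calc |∑ i ∈ Finset.univ.erase j, a i * v i|
        ≤ ∑ i ∈ Finset.univ.erase j, |a i| * |v i| := by
          simpa only [abs_mul] using Finset.abs_sum_le_sum_abs (fun i => a i * v i) _
      _ ≤ ∑ _i ∈ Finset.univ.erase j, |a j| * δ := Finset.sum_le_sum fun i hi =>
          mul_le_mul (hmax i) (hv i (Finset.ne_of_mem_erase hi)) (abs_nonneg _) (abs_nonneg _)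
      _ = (Fintype.card ι - 1) * (|a j| * δ) := by
          rw [Finset.sum_const, Finset.card_erase_of_mem (Finset.mem_univ j), nsmul_eq_mul,
            Finset.card_univ, Nat.cast_sub (Fintype.card_pos_iff.2 ⟨j⟩), Nat.cast_one]
  have haj' : 0 < |a j| := abs_pos.2 haj
  rw [div_add' _ _ _ haj'.ne', le_div_iff₀ haj']
  calc |v j| * |a j| = |a j * v j| := by rw [abs_mul, mul_comm]
    _ ≤ η + (Fintype.card ι - 1) * (|a j| * δ) := by
      rw [hsplit]; exact (abs_sub _ _).trans (add_le_add hη hrest)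
    _ = η + (Fintype.card ι - 1) * δ * |a j| := by ring

lemma eq_of_sub_eq_intCast_of_abs_lt {u v : ℝ} {k : ℤ} (hk : u - v = k) (hu : |u| < 1 / 2)
    (hv : |v| ≤ 1 / 2) : u = v := by
  have hk1 : |k| < 1 := by
    rw [← Int.cast_lt (R := ℝ), Int.cast_abs, ← hk, Int.cast_one]
    exact (abs_sub _ _).trans_lt (by linarith)
  rw [Int.abs_lt_one_iff.1 hk1, Int.cast_zero] at hk
  exact sub_eq_zero.1 hk

lemma exists_distInt_le_of_abs_linear_form_sub_le {d : ℕ} (x : Fin d → ℝ) (n : Fin d → ℤ)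
    (j : Fin d) (hmax : ∀ i, |(n i : ℝ)| ≤ |(n j : ℝ)|) (hnj : n j ≠ 0) {m : ℕ} (hm : 0 < m)
    (b : ℤ) {ε : ℝ} (hb : |∑ i, (n i : ℝ) * x i - b| ≤ ε)
    (hsmall : ((m ^ (d - 1) * (2 * (n j).natAbs) : ℕ) : ℝ) * ε ≤ 1 / 2) :
    ∃ q : ℕ, 0 < q ∧ q ≤ m ^ (d - 1) * (2 * (n j).natAbs) ∧
      distInt (fun i => (q : ℝ) * x i) ≤ q * ε / |(n j : ℝ)| + d / m := by
  obtain ⟨q, p, hq, hqQ, hcoord, hform⟩ := exists_approx_of_linear_form x n j hnj hm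
    (M := 2 * (n j).natAbs) (by have := Int.natAbs_pos.2 hnj; omega)
  rw [Fintype.card_fin] at hqQ
  have hε : 0 ≤ ε := (abs_nonneg _).trans hb
  have hqε : q * ε ≤ 1 / 2 :=
    (mul_le_mul_of_nonneg_right (by exact_mod_cast hqQ) hε).trans hsmall
  have hform' : |∑ i, (n i : ℝ) * (q * x i - p i)| ≤ q * ε := by
    have hM : |(n j : ℝ)| / ((2 * (n j).natAbs : ℕ) : ℝ) = 1 / 2 := by
      rw [Nat.cast_mul, Nat.cast_natAbs, Int.cast_abs, Nat.cast_two]; field_simp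
    have hqb : |q * (∑ i, (n i : ℝ) * x i - b)| ≤ q * ε := by
      rw [abs_mul, Nat.abs_cast]; gcongr
    rwa [eq_of_sub_eq_intCast_of_abs_lt (k := q * b - ∑ i, n i * p i) (by
      push_cast
      simp only [mul_sub, Finset.mul_sum, Finset.sum_sub_distrib, mul_left_comm (q : ℝ)]
      ring)
      (hform.trans_eq hM) (hqb.trans hqε)]
  have hj := abs_le_of_abs_sum_mul_le hmax (by exact_mod_cast hnj) (fun i hi => (hcoord i hi).le)
    hform'
  rw [Fintype.card_fin, mul_one_div] at hj
  have hd : (1 : ℝ) ≤ d := by exact_mod_cast Fin.pos_iff_nonempty.2 ⟨j⟩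
  have hcoord' : ∀ i, |q * x i - p i| ≤ q * ε / |(n j : ℝ)| + d / m := fun i => by
    rcases eq_or_ne i j with rfl | hi
    · exact hj.trans (by gcongr; linarith)
    · exact (hcoord i hi).le.trans (le_add_of_nonneg_of_le (by positivity) (by gcongr))
  exact ⟨q, hq, hqQ, (distInt_le_norm_sub _ p).trans
    ((pi_norm_le_iff_of_nonneg (by positivity)).2 hcoord')⟩

lemma exists_distInt_le_of_distZ_le {d : ℕ} (x : Fin d → ℝ) (n : Fin d → ℤ) (j : Fin d)
    (hmax : ∀ i, |(n i : ℝ)| ≤ |(n j : ℝ)|) (hnj : n j ≠ 0) {T : ℝ} (hT : 1 ≤ T)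
    (hdist : distZ (∑ i, (n i : ℝ) * x i) ≤ (T ^ d)⁻¹)
    (hlarge : 2 ^ (d + 1) * |(n j : ℝ)| ≤ T) :
    ∃ q : ℕ, 0 < q ∧ (q : ℝ) ≤ 2 ^ d * T ^ (d - 1) * |(n j : ℝ)| ∧
      distInt (fun i => (q : ℝ) * x i) ≤ (2 ^ d + d) / T := by
  have hd : d ≠ 0 := (Fin.pos_iff_nonempty.2 ⟨j⟩).ne'
  have hT0 : 0 < T := one_pos.trans_le hT
  have hX : 0 < |(n j : ℝ)| := abs_pos.2 (by exact_mod_cast hnj)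
  set X := |(n j : ℝ)|
  set m := ⌈T⌉₊
  have hTm : T ≤ m := Nat.le_ceil T
  have hm2 : (m : ℝ) ≤ 2 * T := by linarith [Nat.ceil_lt_add_one hT0.le]
  have hQ : ((m ^ (d - 1) * (2 * (n j).natAbs) : ℕ) : ℝ) ≤ 2 ^ d * T ^ (d - 1) * X := by
    rw [Nat.cast_mul, Nat.cast_mul, Nat.cast_pow, Nat.cast_natAbs, Int.cast_abs, Nat.cast_two]
    calc (m : ℝ) ^ (d - 1) * (2 * X) ≤ (2 * T) ^ (d - 1) * (2 * X) := by gcongr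
      _ = 2 ^ d * T ^ (d - 1) * X := by rw [← pow_sub_one_mul hd (2 : ℝ)]; ring
  have hQε : ((m ^ (d - 1) * (2 * (n j).natAbs) : ℕ) : ℝ) * (T ^ d)⁻¹ ≤ 2 ^ d * X / T := by
    calc _ ≤ 2 ^ d * T ^ (d - 1) * X * (T ^ d)⁻¹ := by gcongr
      _ = 2 ^ d * X / T := by rw [← pow_sub_one_mul hd T]; field_simp
  have hsmall : 2 ^ d * X / T ≤ 1 / 2 := by
    rw [div_le_iff₀ hT0]; rw [pow_succ] at hlarge; linarith
  obtain ⟨q, hq, hqQ, hqx⟩ := exists_distInt_le_of_abs_linear_form_sub_le x n j hmax hnj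
    (Nat.ceil_pos.2 hT0) (round (∑ i, (n i : ℝ) * x i))
    ((distZ_eq_abs_sub_round _).symm.le.trans hdist) (hQε.trans hsmall)
  have hqX : (q : ℝ) ≤ 2 ^ d * T ^ (d - 1) * X := (Nat.cast_le.2 hqQ).trans hQ
  refine ⟨q, hq, hqX, hqx.trans ?_⟩
  calc (q : ℝ) * (T ^ d)⁻¹ / X + d / m ≤ 2 ^ d * T ^ (d - 1) * X * (T ^ d)⁻¹ / X + d / T := by
        gcongr
    _ = (2 ^ d + d) / T := by rw [← pow_sub_one_mul hd T]; field_simp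

lemma finite_setOf_norm_intCast_le (d : ℕ) (R : ℝ) :
    {n : Fin d → ℤ | ‖fun i => (n i : ℝ)‖ ≤ R}.Finite := by
  refine (isCompact_closedBall (0 : Fin d → ℤ) R).finite_of_discrete.subset fun n hn => ?_
  rw [Metric.mem_closedBall, dist_zero_right, pi_norm_le_iff_of_nonneg ((norm_nonneg _).trans hn)]
  exact fun i => (Int.norm_cast_real (n i)).symm.le.trans ((norm_le_pi_norm _ i).trans hn)

lemma exists_distInt_le_of_distZ_le_norm_rpow {d : ℕ} (hd : 0 < d) (x : Fin d → ℝ)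
    (n : Fin d → ℤ) {ω : ℝ} (hω : 0 < ω) (hX : 1 ≤ ‖fun i => (n i : ℝ)‖)
    (hlarge : 2 ^ (d + 1) ≤ ‖fun i => (n i : ℝ)‖ ^ (ω / d))
    (hgood : distZ (∑ i, (n i : ℝ) * x i) ≤ ‖fun i => (n i : ℝ)‖ ^ (-((d : ℝ) + ω))) :
    ∃ q : ℕ, 0 < q ∧
      (q : ℝ) ≤ 2 ^ d * ‖fun i => (n i : ℝ)‖ ^ ((d ^ 2 + (d - 1) * ω) / d) ∧
      distInt (fun i => (q : ℝ) * x i) ≤ (2 ^ d + d) / ‖fun i => (n i : ℝ)‖ ^ ((d + ω) / d) := by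
  set X := ‖fun i => (n i : ℝ)‖
  have hX0 : 0 < X := one_pos.trans_le hX
  have : Nonempty (Fin d) := Fin.pos_iff_nonempty.1 hd
  obtain ⟨⟨j, hj⟩, hmax⟩ := IsGreatest.pi_norm fun i => (n i : ℝ)
  simp only [Real.norm_eq_abs] at hj
  have hnj : n j ≠ 0 := by rintro h; simp [h] at hj; linarith
  have hT : 1 ≤ X ^ ((d + ω) / d) := Real.one_le_rpow hX (by positivity)
  have hTd : ((X ^ ((d + ω) / d)) ^ d)⁻¹ = X ^ (-((d : ℝ) + ω)) := by
    rw [← Real.rpow_natCast, ← Real.rpow_mul hX0.le, Real.rpow_neg hX0.le]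
    congr 2; field_simp
  have hTX : 2 ^ (d + 1) * X ≤ X ^ ((d + ω) / d) := by
    rw [show X ^ ((d + ω) / d) = X ^ (ω / d) * X by
      rw [← Real.rpow_add_one hX0.ne']; congr 1; field_simp; ring]
    gcongr
  obtain ⟨q, hq, hqT, hqx⟩ := exists_distInt_le_of_distZ_le x n j
    (fun i => (hmax ⟨i, rfl⟩).trans_eq hj.symm) hnj hT (hgood.trans_eq hTd.symm) (hj ▸ hTX)
  refine ⟨q, hq, hqT.trans_eq ?_, hqx⟩
  rw [hj, mul_assoc]
  congr 1
  rw [← Real.rpow_natCast, ← Real.rpow_mul hX0.le, ← Real.rpow_add_one hX0.ne', Nat.cast_sub hd,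
    Nat.cast_one]
  congr 1; field_simp; ring

open Filter in
lemma exists_distInt_le_rpow_of_distZ_le {d : ℕ} (hd : 0 < d) (x : Fin d → ℝ) {ω s c : ℝ}
    (hω : 0 < ω) (hs : 0 ≤ s) (hsω : s * (d ^ 2 + (d - 1) * ω) < d + ω) (hc : 0 < c) :
    ∃ R, ∀ n : Fin d → ℤ, R ≤ ‖fun i => (n i : ℝ)‖ →
      distZ (∑ i, (n i : ℝ) * x i) ≤ ‖fun i => (n i : ℝ)‖ ^ (-((d : ℝ) + ω)) →
      ∃ q : ℕ, 0 < q ∧ distInt (fun i => (q : ℝ) * x i) ≤ (q : ℝ) ^ (-s) ∧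
        distInt (fun i => (q : ℝ) * x i) < c := by
  set e : ℝ := (d + ω) / d
  set β : ℝ := (d ^ 2 + (d - 1) * ω) / d
  set C : ℝ := 2 ^ d + d
  have he : 0 < e := by positivity
  have hβs : β * s < e := by
    simp only [β, e, div_mul_eq_mul_div]; gcongr; linarith
  have h₁ : ∀ᶠ X : ℝ in atTop, 2 ^ (d + 1) ≤ X ^ (ω / d) :=
    (tendsto_rpow_atTop (by positivity)).eventually_ge_atTop _
  have h₂ : ∀ᶠ X : ℝ in atTop, C * (2 ^ d) ^ s ≤ X ^ (e - β * s) :=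
    (tendsto_rpow_atTop (by linarith)).eventually_ge_atTop _
  have h₃ : ∀ᶠ X : ℝ in atTop, C / c < X ^ e :=
    (tendsto_rpow_atTop he).eventually_gt_atTop _
  obtain ⟨R, hR⟩ := eventually_atTop.1 ((eventually_ge_atTop 1).and (h₁.and (h₂.and h₃)))
  refine ⟨R, fun n hnR hgood => ?_⟩
  set X := ‖fun i => (n i : ℝ)‖
  obtain ⟨hX1, hX₁, hX₂, hX₃⟩ := hR X hnR
  have hX0 : 0 < X := one_pos.trans_le hX1
  have hT0 : 0 < X ^ e := by positivity
  obtain ⟨q, hq, hqX, hqx⟩ := exists_distInt_le_of_distZ_le_norm_rpow hd x n hω hX1 hX₁ hgood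
  refine ⟨q, hq, ?_, hqx.trans_lt ((div_lt_iff₀ hT0).2 ?_)⟩
  · calc distInt (fun i => (q : ℝ) * x i) ≤ C / X ^ e := hqx
      _ ≤ (2 ^ d * X ^ β) ^ (-s) := by
        rw [Real.rpow_neg (by positivity), ← one_div, div_le_div_iff₀ hT0 (by positivity),
          one_mul, Real.mul_rpow (by positivity) (by positivity), ← Real.rpow_mul hX0.le]
        calc C * ((2 ^ d) ^ s * X ^ (β * s)) = C * (2 ^ d) ^ s * X ^ (β * s) := by ring
          _ ≤ X ^ (e - β * s) * X ^ (β * s) := by gcongr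
          _ = X ^ e := by rw [← Real.rpow_add hX0, sub_add_cancel]
      _ ≤ (q : ℝ) ^ (-s) :=
        Real.rpow_le_rpow_of_nonpos (by exact_mod_cast hq) hqX (neg_nonpos.2 hs)
  · rwa [div_lt_iff₀ hc, mul_comm] at hX₃

lemma infinite_setOf_distInt_le_rpow {d : ℕ} (hd : 0 < d) (x : Fin d → ℝ) {ω ω' : ℝ}
    (hω : 0 < ω) (hω' : 0 ≤ ω') (hlt : ω' < ω / (d ^ 2 + (d - 1) * ω))
    (hinf : {n : Fin d → ℤ | n ≠ 0 ∧
      distZ (∑ i, (n i : ℝ) * x i) ≤ ‖fun i => (n i : ℝ)‖ ^ (-((d : ℝ) + ω))}.Infinite) :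
    {q : ℕ | 0 < q ∧
      distInt (fun i => (q : ℝ) * x i) ≤ (q : ℝ) ^ (-((1 + ω') / d))}.Infinite := by
  have hd' : (1 : ℝ) ≤ d := by exact_mod_cast hd
  have hD : 0 < (d : ℝ) ^ 2 + (d - 1) * ω := by nlinarith
  have hexp : (1 + ω') / d * (d ^ 2 + (d - 1) * ω) < d + ω := by
    rw [lt_div_iff₀ hD] at hlt
    rw [div_mul_eq_mul_div, div_lt_iff₀ (by positivity)]
    nlinarith
  refine infinite_setOf_distInt_le x (fun q => Real.rpow_nonneg q.cast_nonneg _) fun c hc => ?_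
  obtain ⟨R, hR⟩ := exists_distInt_le_rpow_of_distZ_le hd x hω (by positivity) hexp hc
  obtain ⟨n, ⟨-, hn⟩, hnR⟩ := (hinf.sdiff (finite_setOf_norm_intCast_le d R)).nonempty
  exact hR n (not_le.1 hnR).le hn

-- Not an equality: for `a = ∞` and `b ≠ 0` the left side is `∞ / ∞ = 0`.
lemma ENNReal.div_add_mul_le_inv_mul_inv_add (a b c : ℝ≥0∞) :
    a / (c + b * a) ≤ (c * a⁻¹ + b)⁻¹ := by
  rw [ENNReal.le_inv_iff_mul_le, div_eq_mul_inv]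
  calc a * (c + b * a)⁻¹ * (c * a⁻¹ + b) = (c * (a * a⁻¹) + b * a) * (c + b * a)⁻¹ := by ring
    _ ≤ (c * 1 + b * a) * (c + b * a)⁻¹ := by gcongr; exact ENNReal.mul_inv_le_one a
    _ ≤ 1 := by rw [mul_one]; exact ENNReal.mul_inv_le_one _

-- Inverted, the transference bound is affine in `ω⁻¹`, so it passes to the supremum defining `ω_D`.
lemma inv_omegaS_le {d : ℕ} (hd : 1 ≤ d) (x : Fin d → ℝ) {ω : ℝ} (hω : 0 < ω)
    (hinf : {n : Fin d → ℤ | n ≠ 0 ∧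
      distZ (∑ i, (n i : ℝ) * x i) ≤ ‖fun i => (n i : ℝ)‖ ^ (-((d : ℝ) + ω))}.Infinite) :
    (omegaS x)⁻¹ ≤ (d : ℝ≥0∞) ^ 2 * (ENNReal.ofReal ω)⁻¹ + ((d : ℝ≥0∞) - 1) := by
  have hd' : (1 : ℝ) ≤ d := by exact_mod_cast hd
  have hD : 0 < (d : ℝ) ^ 2 + (d - 1) * ω := by nlinarith
  have hrhs : ((d : ℝ≥0∞) ^ 2 * (ENNReal.ofReal ω)⁻¹ + ((d : ℝ≥0∞) - 1))⁻¹ =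
      ENNReal.ofReal (ω / (d ^ 2 + (d - 1) * ω)) := by
    rw [← ENNReal.ofReal_inv_of_pos hω, ← ENNReal.ofReal_natCast,
      ← ENNReal.ofReal_pow d.cast_nonneg, ← ENNReal.ofReal_one, ← ENNReal.ofReal_sub _ zero_le_one,
      ← ENNReal.ofReal_mul (by positivity), ← ENNReal.ofReal_add (by positivity) (by linarith),
      ← ENNReal.ofReal_inv_of_pos (by positivity)]
    congr 1; field_simp
  rw [ENNReal.inv_le_iff_inv_le, hrhs]
  refine ENNReal.le_of_forall_nnreal_lt fun r hr => ?_
  rcases eq_or_ne r 0 with rfl | hr0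
  · simp
  rw [← ENNReal.ofReal_coe_nnreal] at hr ⊢
  have hrω : (r : ℝ) < ω / (d ^ 2 + (d - 1) * ω) :=
    (ENNReal.ofReal_lt_ofReal_iff (by positivity)).1 hr
  exact le_iSup₂_of_le (f := fun ω (_ : ω ∈ {ω : ℝ | 0 < ω ∧ _}) => ENNReal.ofReal ω) (r : ℝ)
    ⟨NNReal.coe_pos.2 (pos_iff_ne_zero.2 hr0),
      infinite_setOf_distInt_le_rpow hd x hω r.coe_nonneg hrω hinf⟩ le_rfl

theorem stmt_8 (d : ℕ) (hd : 1 ≤ d) (x : Fin d → ℝ) (h : 0 < omegaD x) :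
    0 < omegaS x ∧
      omegaD x / ((d : ℝ≥0∞) ^ 2 + ((d : ℝ≥0∞) - 1) * omegaD x) ≤ omegaS x := by
  constructor
  · obtain ⟨ω, hω⟩ := lt_iSup_iff.1 h
    obtain ⟨⟨hω0, hinf⟩, -⟩ := lt_iSup_iff.1 hω
    have hfin : (d : ℝ≥0∞) ^ 2 * (ENNReal.ofReal ω)⁻¹ + ((d : ℝ≥0∞) - 1) ≠ ⊤ :=
      ENNReal.add_ne_top.2 ⟨ENNReal.mul_ne_top (by simp) (by simpa using hω0),
        ENNReal.sub_ne_top (by simp)⟩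
    exact pos_iff_ne_zero.2 <| ENNReal.inv_ne_top.1 <|
      ne_top_of_le_ne_top hfin (inv_omegaS_le hd x hω0 hinf)
  · have hd0 : (d : ℝ≥0∞) ^ 2 ≠ 0 := pow_ne_zero _ (by exact_mod_cast (by omega : d ≠ 0))
    have hdtop : (d : ℝ≥0∞) ^ 2 ≠ ⊤ := by simp
    refine (ENNReal.div_add_mul_le_inv_mul_inv_add _ _ _).trans ?_
    rw [ENNReal.inv_le_iff_inv_le, omegaD]
    simp only [ENNReal.inv_iSup, ENNReal.mul_iInf_of_ne hd0 hdtop, ENNReal.iInf_add]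
    exact le_iInf₂ fun ω hω => inv_omegaS_le hd x hω.1 hω.2
end

section
/- Let x ∈ R^{d−1}, let ψ : N → R^+ be nonincreasing, and let N ∈ N satisfy N^{−1/(d−1)} < ψ(N) < 1. Then every point of [0,1] lies in some ball B(p/q, 2/(q·N·ψ(N)^{d−1})) where 1 ≤ q ≤ N satisfies ‖qx‖ < ψ(N) and 0 ≤ p ≤ q. -/
/-!
Minkowski's theorem for the body `|q| ≤ N`, `|q y - p| ≤ c`, `|q xᵢ - aᵢ| ≤ η` in `ℝ^(l+2)`,
the image of an axis-parallel box under a shear of determinant one, produces a nonzero integer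
point as soon as `N c η^l ≥ 1`; when all radii but the first are below `1`, its `q`-coordinate is
nonzero. Taking `η < ψ(N)` close enough to `ψ(N)` that `N η^l > 1` and `2 η^l > ψ(N)^l`, and
`c = 1/(N η^l)`, gives `‖q x‖ ≤ η < ψ(N)` and `|y - p/q| ≤ c/q < 2/(q N ψ(N)^l)`; finally `p` is
clamped to `[0, q]`, which only moves `p/q` closer to `y ∈ [0, 1]`.
-/

open scoped Classical

open Matrix in
theorem toLin'_one_add_replicateCol_mul_replicateRow_single {κ : Type*} [Fintype κ]
    [DecidableEq κ] (c : κ → ℝ) (j₀ : κ) (v : κ → ℝ) :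
    toLin' (1 + replicateCol Unit c * replicateRow Unit (Pi.single j₀ (1 : ℝ))) v =
      v + v j₀ • c := by
  ext j
  simp [Matrix.mulVec, dotProduct, Matrix.mul_apply, Pi.single_apply, mul_comm]

open Matrix MeasureTheory Submodule in
theorem exists_int_vec_ne_zero_abs_sub_mul_le {κ : Type*} [Fintype κ] [DecidableEq κ]
    (c r : κ → ℝ) (j₀ : κ) (hc : c j₀ = 0) (hr : ∀ j, 0 ≤ r j) (hvol : 1 ≤ ∏ j, r j) :
    ∃ m : κ → ℤ, m ≠ 0 ∧ ∀ j, |m j - c j * m j₀| ≤ r j := by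
  have : Nonempty κ := ⟨j₀⟩
  let b := Pi.basisFun ℝ κ
  have : Countable (span ℤ (Set.range b)).toAddSubgroup :=
    inferInstanceAs (Countable (span ℤ (Set.range b)))
  let box : Set (κ → ℝ) := Set.univ.pi fun j => Set.Icc (-r j) (r j)
  -- as `c j₀ = 0`, `T` inverts `v ↦ v - v j₀ • c`, so `T '' box` is the body of the conclusion
  let T := toLin' (1 + replicateCol Unit c * replicateRow Unit (Pi.single j₀ (1 : ℝ)))
  have hT : ∀ v, T v = v + v j₀ • c := toLin'_one_add_replicateCol_mul_replicateRow_single c j₀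
  have hdet : LinearMap.det T = 1 := by
    rw [LinearMap.det_toLin', det_one_add_replicateCol_mul_replicateRow]
    simp [hc]
  have hsymm : ∀ v ∈ T '' box, -v ∈ T '' box := by
    rintro _ ⟨w, hw, rfl⟩
    refine ⟨-w, fun j _ => ?_, map_neg T w⟩
    have := hw j trivial
    simp only [Set.mem_Icc, Pi.neg_apply] at this ⊢
    constructor <;> linarith [this.1, this.2]
  have hvolume : volume (ZSpan.fundamentalDomain b) * 2 ^ Module.finrank ℝ (κ → ℝ) ≤
      volume (T '' box) := by
    rw [ZSpan.fundamentalDomain_pi_basisFun, Measure.addHaar_image_linearMap, hdet, volume_pi_pi,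
      volume_pi_pi, Module.finrank_fintype_fun_eq_card]
    simp only [Real.volume_Icc, Real.volume_Ico, sub_zero, ENNReal.ofReal_one, Finset.prod_const_one,
      abs_one, one_mul, sub_neg_eq_add]
    rw [← ENNReal.ofReal_prod_of_nonneg fun j _ => by linarith [hr j], ← ENNReal.ofReal_ofNat 2,
      ← ENNReal.ofReal_pow (by norm_num)]
    refine ENNReal.ofReal_le_ofReal ?_
    calc (2 : ℝ) ^ Fintype.card κ ≤ 2 ^ Fintype.card κ * ∏ j, r j := by
          nlinarith [pow_pos (two_pos (α := ℝ)) (Fintype.card κ)]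
      _ = ∏ j, (r j + r j) := by
          simp only [← two_mul, Finset.prod_mul_distrib, Finset.prod_const, Finset.card_univ]
  obtain ⟨v, hv0, w, hw, hwv⟩ := exists_ne_zero_mem_lattice_of_measure_mul_two_pow_le_measure
    (ZSpan.isAddFundamentalDomain' b volume) hsymm
    ((convex_pi fun j _ => convex_Icc _ _).linear_image T)
    ((isCompact_univ_pi fun _ => isCompact_Icc).image T.continuous_of_finiteDimensional) hvolume
  have hrepr := (b.mem_span_iff_repr_mem ℤ _).mp v.2
  simp only [b, Pi.basisFun_repr, algebraMap_int_eq, Int.coe_castRingHom] at hrepr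
  choose m hm using hrepr
  replace hm : ∀ j, (m j : ℝ) = (v : κ → ℝ) j := hm
  have hvw : ∀ j, (m j : ℝ) = w j + w j₀ * c j := fun j => by
    rw [hm, ← hwv, hT]; simp
  refine ⟨m, fun hm0 => hv0 (Subtype.ext (funext fun j => ?_)), fun j => ?_⟩
  · simp [← hm, hm0]
  · rw [show (m j : ℝ) - c j * m j₀ = w j by rw [hvw, hvw, hc]; ring, abs_le]
    exact hw j trivial

theorem exists_nat_abs_mul_sub_int_le {ι : Type*} [Fintype ι] (α r : ι → ℝ) (Q : ℝ)
    (hr0 : ∀ i, 0 ≤ r i) (hr1 : ∀ i, r i < 1) (hvol : 1 ≤ Q * ∏ i, r i) :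
    ∃ q : ℕ, 0 < q ∧ (q : ℝ) ≤ Q ∧ ∃ a : ι → ℤ, ∀ i, |q * α i - a i| ≤ r i := by
  have hQ : 0 ≤ Q := by
    by_contra! hQ
    nlinarith [Finset.prod_nonneg fun i (_ : i ∈ Finset.univ) => hr0 i]
  obtain ⟨m, hm0, hm⟩ := exists_int_vec_ne_zero_abs_sub_mul_le (fun j => j.elim 0 α)
    (fun j => j.elim Q r) none rfl (Option.rec hQ hr0) (by rwa [Fintype.prod_option])
  have hnone : m none ≠ 0 := by
    intro h
    refine hm0 (funext fun j => j.rec h fun i => ?_)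
    have := (hm (some i)).trans_lt (hr1 i)
    simp only [h, Int.cast_zero, mul_zero, sub_zero, ← Int.cast_abs] at this
    exact Int.abs_lt_one_iff.mp (by exact_mod_cast this)
  obtain ⟨n, hn, hnr⟩ : ∃ n : Option ι → ℤ,
      0 < n none ∧ ∀ j, |n j - j.elim 0 α * n none| ≤ j.elim Q r := by
    rcases hnone.lt_or_gt with h | h
    · refine ⟨-m, neg_pos.mpr h, fun j => ?_⟩
      rw [← abs_neg]
      convert hm j using 2
      simp only [Pi.neg_apply, Int.cast_neg]
      ring
    · exact ⟨m, h, hm⟩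
  have hq : (((n none).toNat : ℕ) : ℝ) = n none := by exact_mod_cast Int.toNat_of_nonneg hn.le
  refine ⟨(n none).toNat, by omega, ?_, fun i => n (some i), fun i => ?_⟩
  · simpa [hq] using (le_abs_self _).trans (hnr none)
  · rw [hq, abs_sub_comm, mul_comm]
    exact hnr (some i)

theorem distInt_le_of_abs_sub_le {l : ℕ} (x : Fin l → ℝ) (a : Fin l → ℤ) {r : ℝ} (hr : 0 ≤ r)
    (h : ∀ i, |x i - a i| ≤ r) : distInt x ≤ r :=
  (ciInf_le ⟨0, by rintro _ ⟨p, rfl⟩; exact norm_nonneg _⟩ a).trans <|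
    (pi_norm_le_iff_of_nonneg hr).mpr fun i => by simpa using h i

theorem exists_nat_le_abs_sub_le_abs_sub_int {t : ℝ} {q : ℕ} (ht0 : 0 ≤ t) (htq : t ≤ q)
    (p : ℤ) : ∃ p' : ℕ, p' ≤ q ∧ |t - p'| ≤ |t - p| := by
  rcases le_or_gt p 0 with hp | hp
  · refine ⟨0, q.zero_le, ?_⟩
    have : (p : ℝ) ≤ 0 := by exact_mod_cast hp
    rw [Nat.cast_zero, sub_zero, abs_of_nonneg ht0]
    exact (by linarith : t ≤ t - p).trans (le_abs_self _)
  rcases le_or_gt p q with hpq | hpq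
  · exact ⟨p.toNat, by omega, by rw [← Int.cast_natCast, Int.toNat_of_nonneg hp.le]⟩
  · refine ⟨q, le_rfl, ?_⟩
    have : (q : ℝ) < p := by exact_mod_cast hpq
    rw [abs_of_nonpos (by linarith)]
    exact (by linarith : -(t - q) ≤ -(t - p)).trans (neg_le_abs _)

open Filter Topology in
theorem exists_lt_of_lt_pow {ψ m : ℝ} (l : ℕ) (hψ : 0 < ψ) (hm : m < ψ ^ l) :
    ∃ η, 0 < η ∧ η < ψ ∧ m < η ^ l := by
  have hpow : ∀ᶠ η in 𝓝[<] ψ, m < η ^ l :=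
    ((continuous_pow l).tendsto ψ |>.mono_left nhdsWithin_le_nhds).eventually (lt_mem_nhds hm)
  obtain ⟨η, hηm, hη0, hηψ⟩ := (hpow.and (Ioo_mem_nhdsLT hψ)).exists
  exact ⟨η, hη0, hηψ, hηm⟩

theorem inv_lt_pow_of_rpow_neg_inv_lt {N ψ : ℝ} {l : ℕ} (hl : l ≠ 0) (hN : 0 < N)
    (h : N ^ (-(1 / (l : ℝ))) < ψ) : N⁻¹ < ψ ^ l :=
  calc N⁻¹ = (N ^ (-(1 / (l : ℝ)))) ^ l := by
        rw [← Real.rpow_natCast, ← Real.rpow_mul hN.le, neg_mul, one_div_mul_cancel (by simpa),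
          Real.rpow_neg_one]
    _ < ψ ^ l := pow_lt_pow_left₀ h (Real.rpow_nonneg hN.le _) hl

theorem exists_approx_of_one_lt_mul_pow {l : ℕ} (x : Fin l → ℝ) {y : ℝ} (hy0 : 0 ≤ y)
    (hy1 : y ≤ 1) (N : ℕ) {η : ℝ} (hη0 : 0 < η) (hη1 : η < 1) (hNη : 1 < N * η ^ l) :
    ∃ q : ℕ, 0 < q ∧ q ≤ N ∧ (∃ a : Fin l → ℤ, ∀ i, |q * x i - a i| ≤ η) ∧
      ∃ p : ℕ, p ≤ q ∧ |y - p / q| ≤ (q * N * η ^ l)⁻¹ := by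
  have hNη0 : 0 < (N : ℝ) * η ^ l := one_pos.trans hNη
  obtain ⟨q, hq0, hqN, a, ha⟩ := exists_nat_abs_mul_sub_int_le (Option.elim · y x)
    (Option.elim · (N * η ^ l)⁻¹ fun _ => η) N (Option.rec (inv_pos.mpr hNη0).le fun _ => hη0.le)
    (Option.rec (inv_lt_one_of_one_lt₀ hNη) fun _ => hη1)
    (by
      simp only [Fintype.prod_option, Option.elim, Finset.prod_const, Finset.card_univ,
        Fintype.card_fin]
      rw [mul_comm _ (η ^ l), ← mul_assoc, mul_inv_cancel₀ hNη0.ne'])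
  have hq : (0 : ℝ) < q := by exact_mod_cast hq0
  obtain ⟨p, hpq, hp⟩ := exists_nat_le_abs_sub_le_abs_sub_int (mul_nonneg hq.le hy0)
    (mul_le_of_le_one_right hq.le hy1) (a none)
  refine ⟨q, hq0, by exact_mod_cast hqN, ⟨fun i => a (some i), fun i => ha (some i)⟩, p, hpq, ?_⟩
  calc |y - p / q| = |q * y - p| / q := by
        rw [← abs_of_pos hq, ← abs_div, abs_of_pos hq, sub_div, mul_div_cancel_left₀ _ hq.ne']
    _ ≤ (N * η ^ l)⁻¹ / q := by gcongr; exact hp.trans (ha none)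
    _ = (q * N * η ^ l)⁻¹ := by rw [div_eq_mul_inv, ← mul_inv, mul_comm, ← mul_assoc]

theorem stmt_9_general (l d : ℕ) (hd : d = l + 1) (hd2 : 2 ≤ d) (x : Fin l → ℝ)
    (ψ : ℕ → ℝ) (hψpos : ∀ q, 0 < ψ q) (N : ℕ) (hN : 1 ≤ N)
    (hlow : (N : ℝ) ^ (-(1 / (l : ℝ))) < ψ N) (hup : ψ N < 1) :
    ∀ y ∈ Set.Icc (0 : ℝ) 1, ∃ q : ℕ, 1 ≤ q ∧ q ≤ N ∧
      distInt (fun i => (q : ℝ) * x i) < ψ N ∧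
      ∃ p : ℕ, p ≤ q ∧ |y - (p : ℝ) / q| < 2 / ((q : ℝ) * N * ψ N ^ l) := by
  rintro y ⟨hy0, hy1⟩
  have hN0 : (0 : ℝ) < N := by exact_mod_cast hN
  have hψl : 0 < ψ N ^ l := pow_pos (hψpos N) l
  have hinv : (N : ℝ)⁻¹ < ψ N ^ l := inv_lt_pow_of_rpow_neg_inv_lt (by omega) hN0 hlow
  obtain ⟨η, hη0, hηψ, hη⟩ := exists_lt_of_lt_pow l (hψpos N) (max_lt hinv (half_lt_self hψl))
  have hNη : 1 < N * η ^ l := by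
    have := (le_max_left _ _).trans_lt hη
    rwa [inv_lt_iff_one_lt_mul₀ hN0, mul_comm] at this
  obtain ⟨q, hq0, hqN, ⟨a, ha⟩, p, hpq, hp⟩ :=
    exists_approx_of_one_lt_mul_pow x hy0 hy1 N hη0 (hηψ.trans hup) hNη
  refine ⟨q, hq0, hqN, (distInt_le_of_abs_sub_le _ a hη0.le ha).trans_lt hηψ, p, hpq,
    hp.trans_lt ?_⟩
  have hq : (0 : ℝ) < q := by exact_mod_cast hq0
  rw [← one_div, div_lt_div_iff₀ (by positivity) (by positivity)]
  nlinarith [(le_max_right _ _).trans_lt hη, mul_pos hq hN0]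

theorem stmt_9 (l d : ℕ) (hd : d = l + 1) (hd2 : 2 ≤ d) (x : Fin l → ℝ)
    (ψ : ℕ → ℝ) (hψpos : ∀ q, 0 < ψ q) (hψmono : Antitone ψ) (N : ℕ) (hN : 1 ≤ N)
    (hlow : (N : ℝ) ^ (-(1 / (l : ℝ))) < ψ N) (hup : ψ N < 1) :
    ∀ y ∈ Set.Icc (0 : ℝ) 1, ∃ q : ℕ, 1 ≤ q ∧ q ≤ N ∧
      distInt (fun i => (q : ℝ) * x i) < ψ N ∧
      ∃ p : ℕ, p ≤ q ∧ |y - (p : ℝ) / q| < 2 / ((q : ℝ) * N * ψ N ^ l) :=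
  stmt_9_general l d hd hd2 x ψ hψpos N hN hlow hup
end

section
/- Let Λ ⊆ R^n be a unimodular lattice whose Dirichlet fundamental domain centered at 0 is not contained in the sup-norm ball of radius R. Then the dual lattice Λ* = {s ∈ R^n : ⟨r, s⟩ ∈ Z for all r ∈ Λ} contains a nonzero vector s with |s|_∞ ≤ C/R, where C is a constant depending only on n. -/
open scoped Classical

/-- The lattice `B ℤ^n ⊆ ℝ^n` spanned by the columns of the matrix `B`
(with the sup norm on `ℝ^n`). -/
def latticeOf {n : ℕ} (B : Matrix (Fin n) (Fin n) ℝ) : Set (Fin n → ℝ) :=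
  {v | ∃ m : Fin n → ℤ, v = B.mulVec fun i => (m i : ℝ)}

/-- The Dirichlet fundamental domain of a lattice `Λ ⊆ ℝ^n` centered at `0`:
points at least as close (in sup norm) to `0` as to any other lattice point. -/
def dirichletDomain {n : ℕ} (Λ : Set (Fin n → ℝ)) : Set (Fin n → ℝ) :=
  {r | ∀ v ∈ Λ, ‖r‖ ≤ ‖r - v‖}

/-- The dual lattice of a lattice `Λ ⊆ ℝ^n`. -/
def dualLattice {n : ℕ} (Λ : Set (Fin n → ℝ)) : Set (Fin n → ℝ) :=
  {s | ∀ r ∈ Λ, ∃ z : ℤ, ∑ i, r i * s i = (z : ℝ)}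

/-!
Hermite's reduction: a lattice of rank `k` with Gram determinant `D` contains `k` linearly
independent vectors the product of whose squared lengths is at most `2 ^ (k * k) * D`. Take a
shortest vector `w`, complete it to a lattice basis, project the other basis vectors onto `w`ᗮ,
reduce the projected lattice by induction and lift back with `w`-coefficients in `[-1/2, 1/2]`;
minimality of `w` makes the squared length of each lift at most `4/3` times that of its
projection.

For the unimodular lattice this yields independent `w j ∈ Λ` with `∏ ‖w j‖ ≤ 2 ^ (n * n)`.
Rounding coordinates in this basis bounds the Dirichlet domain by `(∑ ‖w j‖) / 2`, so the
longest `w i₀` has `‖w i₀‖ ≥ 2R / n`. The linear form `x ↦ det (w with w i₀ replaced by x)` is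
integral on `Λ`, so it is a nonzero vector of `Λ*`, and expanding the determinant bounds it by
`n ! * ∏_{j ≠ i₀} ‖w j‖ ≪ 1 / R`.
-/

open Matrix Module Submodule Set
open scoped InnerProductSpace Nat

theorem Module.Basis.exists_eq_smul_basis {R M ι : Type*} [CommRing R] [IsDomain R]
    [IsPrincipalIdealRing R] [AddCommGroup M] [Module R M] [Finite ι] [Nonempty ι]
    (b : Basis ι R M) (x : M) : ∃ (b' : Basis ι R M) (i : ι) (a : R), x = a • b' i := by
  obtain ⟨n, bM, bN, f, a, snf⟩ := (span R {x}).smithNormalForm b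
  have hn : n ≤ 1 := by
    simpa [Module.finrank_eq_card_basis bN] using finrank_span_le_card (R := R) ({x} : Set M)
  have hx := bN.sum_repr ⟨x, mem_span_singleton_self x⟩
  interval_cases n
  · refine ⟨bM, Classical.arbitrary ι, 0, ?_⟩
    simpa using congrArg Subtype.val hx.symm
  · refine ⟨bM, f 0, bN.repr ⟨x, mem_span_singleton_self x⟩ 0 * a 0, ?_⟩
    rw [mul_smul, ← snf, ← Submodule.coe_smul, ← Fin.sum_univ_one (fun i => _ • bN i), hx]

section Gram

variable {𝕜 E : Type*} [RCLike 𝕜] [NormedAddCommGroup E] [InnerProductSpace 𝕜 E]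

theorem gram_sum_smul {ι κ : Type*} [Fintype ι] (v : ι → E) (P : Matrix ι κ 𝕜) :
    gram 𝕜 (fun j => ∑ i, P i j • v i) = Pᴴ * gram 𝕜 v * P := by
  ext j j'
  simp only [gram_apply, mul_apply, conjTranspose_apply, sum_inner, inner_sum, inner_smul_left,
    inner_smul_right, Finset.sum_mul, Finset.mul_sum, RCLike.star_def]
  exact Finset.sum_congr rfl fun _ _ => Finset.sum_congr rfl fun _ _ => by ring

theorem det_gram_add_smul {ι : Type*} [Fintype ι] [DecidableEq ι] (x : ι → E) (c : ι → 𝕜)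
    (i₀ : ι) (hc : c i₀ = 0) :
    (gram 𝕜 fun j => x j + c j • x i₀).det = (gram 𝕜 x).det := by
  set P : Matrix ι ι 𝕜 := 1 + vecMulVec (Pi.single i₀ 1) c with hPdef
  have hP : P.det = 1 := by
    rw [hPdef, vecMulVec_eq Unit, det_one_add_replicateCol_mul_replicateRow, dotProduct_single, hc]
    simp
  have hx : (fun j => x j + c j • x i₀) = fun j => ∑ i, P i j • x i := by
    funext j
    simp [P, add_smul, Finset.sum_add_distrib, one_apply, vecMulVec_apply, Pi.single_apply]
  rw [hx, gram_sum_smul, det_mul, det_mul, det_conjTranspose, hP]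
  simp

theorem det_gram_cons_add_smul {k : ℕ} (w : E) (u : Fin k → E) (c : Fin k → 𝕜) :
    (gram 𝕜 (Fin.cons w fun j => u j + c j • w : Fin (k + 1) → E)).det =
      (gram 𝕜 (Fin.cons w u : Fin (k + 1) → E)).det := by
  rw [← det_gram_add_smul (Fin.cons w u) (Fin.cons 0 c) 0 rfl]
  congr 2
  funext j
  cases j using Fin.cases <;> simp

theorem det_gram_cons_of_inner_eq_zero {k : ℕ} (w : E) (u : Fin k → E)
    (h : ∀ j, ⟪w, u j⟫_𝕜 = 0) :
    (gram 𝕜 (Fin.cons w u : Fin (k + 1) → E)).det = (‖w‖ : 𝕜) ^ 2 * (gram 𝕜 u).det := by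
  rw [det_succ_row_zero, Fin.sum_univ_succ, Finset.sum_eq_zero fun j _ => by simp [gram_apply, h]]
  simp [gram_apply, inner_self_eq_norm_sq_to_K, submatrix]
  exact Or.inl rfl

end Gram

section Shortest

variable {F : Type*} [NormedAddCommGroup F] [NormedSpace ℝ F] {ι : Type*} [Fintype ι]
  {v : ι → F}

theorem finite_setOf_norm_linearCombination_int_le (hv : LinearIndependent ℝ v) (D : ℝ) :
    {m : ι → ℤ | ‖Fintype.linearCombination ℤ v m‖ ≤ D}.Finite := by
  have hker : LinearMap.ker (Fintype.linearCombination ℝ v) = ⊥ :=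
    LinearMap.ker_eq_bot.2 (linearIndependent_iff_injective_fintypeLinearCombination.1 hv)
  obtain ⟨K, -, hK⟩ := (Fintype.linearCombination ℝ v).exists_antilipschitzWith hker
  set N : ℤ := ⌈K * D⌉
  refine (Set.finite_Icc (fun _ => -N) fun _ => N).subset fun m hm => ?_
  have hmK : ‖fun i => (m i : ℝ)‖ ≤ K * D := by
    refine (hK.le_mul_norm (map_zero _) _).trans (mul_le_mul_of_nonneg_left ?_ K.2)
    simpa [Fintype.linearCombination_apply, Int.cast_smul_eq_zsmul] using hm
  have hmN : ∀ i, |m i| ≤ N := fun i => by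
    have := (norm_le_pi_norm (fun i => (m i : ℝ)) i).trans hmK
    rw [Real.norm_eq_abs] at this
    exact_mod_cast this.trans (Int.le_ceil _)
  exact ⟨fun i => neg_le_of_abs_le (hmN i), fun i => le_of_abs_le (hmN i)⟩

theorem exists_ne_zero_mem_span_int_forall_norm_le [Nonempty ι] (hv : LinearIndependent ℝ v) :
    ∃ w ∈ span ℤ (range v), w ≠ 0 ∧ ∀ x ∈ span ℤ (range v), x ≠ 0 → ‖w‖ ≤ ‖x‖ := by
  obtain ⟨i⟩ := ‹Nonempty ι›
  set S := {x ∈ span ℤ (range v) | x ≠ 0 ∧ ‖x‖ ≤ ‖v i‖}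
  have hS : Set.Finite S := by
    refine ((finite_setOf_norm_linearCombination_int_le hv ‖v i‖).image
      (Fintype.linearCombination ℤ v)).subset fun x ⟨hx, _, hxv⟩ => ?_
    obtain ⟨m, rfl⟩ := (Fintype.range_linearCombination ℤ v).symm ▸ hx
    exact ⟨m, hxv, rfl⟩
  have hvi : v i ∈ S := ⟨subset_span (mem_range_self i), hv.ne_zero i, le_rfl⟩
  obtain ⟨w, ⟨hwL, hw0, hwv⟩, hmin⟩ := Set.exists_min_image S (‖·‖) hS ⟨_, hvi⟩
  refine ⟨w, hwL, hw0, fun x hxL hx0 => ?_⟩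
  by_cases hxv : ‖x‖ ≤ ‖v i‖
  · exact hmin x ⟨hxL, hx0, hxv⟩
  · exact hwv.trans (not_le.1 hxv).le

-- Writing `w = a • y` with `y` a basis vector, minimality of `w` forces `a = ±1`.
theorem exists_basis_linearCombination_eq_of_forall_norm_le [DecidableEq ι] (i₀ : ι) {w : F}
    (hwL : w ∈ span ℤ (range v)) (hw0 : w ≠ 0)
    (hmin : ∀ x ∈ span ℤ (range v), x ≠ 0 → ‖w‖ ≤ ‖x‖) :
    ∃ b : Basis ι ℤ (ι → ℤ), Fintype.linearCombination ℤ v (b i₀) = w := by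
  have : Nonempty ι := ⟨i₀⟩
  obtain ⟨m, rfl⟩ := (Fintype.range_linearCombination ℤ v).symm ▸ hwL
  obtain ⟨b, i, a, rfl⟩ := (Pi.basisFun ℤ ι).exists_eq_smul_basis m
  set y := Fintype.linearCombination ℤ v (b i)
  have hy : Fintype.linearCombination ℤ v (a • b i) = a • y := map_smul _ a (b i)
  have hy0 : y ≠ 0 := fun h => hw0 (by rw [hy, h, smul_zero])
  have hyL : y ∈ span ℤ (range v) :=
    Fintype.range_linearCombination ℤ v ▸ LinearMap.mem_range_self _ _
  have ha : IsUnit a := by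
    have ha0 : a ≠ 0 := by rintro rfl; simp at hw0
    have hle : ‖a • y‖ ≤ 1 * ‖y‖ := by rw [one_mul, ← hy]; exact hmin y hyL hy0
    rw [norm_zsmul ℝ, Real.norm_eq_abs] at hle
    have : (|a| : ℝ) ≤ 1 := by exact_mod_cast le_of_mul_le_mul_right hle (norm_pos_iff.2 hy0)
    exact Int.isUnit_iff_abs_eq.2 (le_antisymm (by exact_mod_cast this) (Int.one_le_abs ha0))
  refine ⟨(b.unitsSMul fun _ => ha.unit).reindex (Equiv.swap i i₀), ?_⟩
  rw [Basis.reindex_apply, Equiv.symm_swap, Equiv.swap_apply_right, Basis.unitsSMul_apply,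
    Units.smul_def, IsUnit.unit_spec]

end Shortest

theorem exists_abs_le_half_add_smul_mem_span_int {V : Type*} [AddCommGroup V] [Module ℝ V]
    {k : ℕ} (w : V) (u : Fin k → V) (c : Fin k → ℝ) {x : V}
    (hx : x ∈ span ℤ (range fun j => u j + c j • w)) :
    ∃ δ : ℝ, |δ| ≤ 1 / 2 ∧ x + δ • w ∈ span ℤ (range (Fin.cons w u : Fin (k + 1) → V)) := by
  obtain ⟨m, rfl⟩ := (mem_span_range_iff_exists_fun ℤ).1 hx
  set t := ∑ j, (m j : ℝ) * c j
  refine ⟨round t - t, by rw [abs_sub_comm]; exact abs_sub_round t, ?_⟩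
  have hx : ∑ j, m j • (u j + c j • w) + (round t - t) • w = ∑ j, m j • u j + round t • w := by
    simp only [← Int.cast_smul_eq_zsmul ℝ, smul_add, Finset.sum_add_distrib, smul_smul,
      ← Finset.sum_smul, sub_smul, t]
    abel
  rw [hx, Fin.range_cons]
  exact add_mem
    (sum_mem fun j _ => zsmul_mem (subset_span (mem_insert_of_mem _ (mem_range_self j))) _)
    (zsmul_mem (subset_span (mem_insert w _)) _)

theorem four_thirds_pow_mul_two_pow_le (k : ℕ) :
    (4 / 3 : ℝ) ^ k * 2 ^ (k * k) ≤ 2 ^ ((k + 1) * (k + 1)) :=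
  calc (4 / 3 : ℝ) ^ k * 2 ^ (k * k) ≤ 2 ^ k * 2 ^ (k * k) := by gcongr; norm_num
    _ ≤ 2 ^ ((k + 1) * (k + 1)) := by
      rw [← pow_add]; exact pow_le_pow_right₀ (by norm_num) (by nlinarith)

section Hermite

variable {E : Type*} [NormedAddCommGroup E] [InnerProductSpace ℝ E]

theorem det_gram_linearCombination_basis {ι : Type*} [Fintype ι] [DecidableEq ι] (v : ι → E)
    (b : Basis ι ℤ (ι → ℤ)) :
    (gram ℝ fun j => Fintype.linearCombination ℤ v (b j)).det = (gram ℝ v).det := by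
  set P : Matrix ι ι ℤ := (Pi.basisFun ℤ ι).toMatrix b
  have hP : IsUnit P.det :=
    @isUnit_det_of_invertible _ _ _ _ _ P ((Pi.basisFun ℤ ι).invertibleToMatrix b)
  have hv : (fun j => Fintype.linearCombination ℤ v (b j)) =
      fun j => ∑ i, (P.map (Int.cast : ℤ → ℝ)) i j • v i := by
    funext j
    simp [P, Fintype.linearCombination_apply, Basis.toMatrix_apply, Int.cast_smul_eq_zsmul]
  rw [hv, gram_sum_smul, det_mul, det_mul, det_conjTranspose, ← Int.cast_det]
  rcases Int.isUnit_iff.1 hP with h | h <;> simp [h]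

theorem exists_cons_forall_norm_le_det_gram_eq {k : ℕ} {v : Fin (k + 1) → E}
    (hv : LinearIndependent ℝ v) :
    ∃ (w : E) (u : Fin k → E), w ≠ 0 ∧ (∀ x ∈ span ℤ (range v), x ≠ 0 → ‖w‖ ≤ ‖x‖) ∧
      span ℤ (range (Fin.cons w u : Fin (k + 1) → E)) ≤ span ℤ (range v) ∧
      (gram ℝ (Fin.cons w u : Fin (k + 1) → E)).det = (gram ℝ v).det := by
  obtain ⟨w, hwL, hw0, hmin⟩ := exists_ne_zero_mem_span_int_forall_norm_le hv
  obtain ⟨b, hb⟩ := exists_basis_linearCombination_eq_of_forall_norm_le 0 hwL hw0 hmin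
  set v' := fun j => Fintype.linearCombination ℤ v (b j)
  refine ⟨w, Fin.tail v', hw0, hmin, ?_⟩
  rw [← hb, show Fintype.linearCombination ℤ v (b 0) = v' 0 from rfl, Fin.cons_self_tail]
  exact ⟨span_le.2 (range_subset_iff.2 fun j =>
    Fintype.range_linearCombination ℤ v ▸ LinearMap.mem_range_self _ _),
    det_gram_linearCombination_basis v b⟩

theorem exists_inner_add_smul_eq_zero_det_gram_eq {k : ℕ} {w : E} (hw : w ≠ 0)
    (u : Fin k → E) :
    ∃ c : Fin k → ℝ, (∀ j, ⟪w, u j + c j • w⟫_ℝ = 0) ∧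
      (gram ℝ (Fin.cons w u : Fin (k + 1) → E)).det =
        ‖w‖ ^ 2 * (gram ℝ fun j => u j + c j • w).det := by
  have hp : ∀ j, ⟪w, u j + (-(⟪w, u j⟫_ℝ / ‖w‖ ^ 2)) • w⟫_ℝ = 0 := fun j => by
    simp only [inner_add_right, inner_smul_right, real_inner_self_eq_norm_sq]
    field_simp
    ring
  refine ⟨_, hp, ?_⟩
  rw [← det_gram_cons_add_smul, det_gram_cons_of_inner_eq_zero w _ hp]
  simp

theorem inner_eq_zero_of_mem_span_int {ι : Type*} {w : E} {p : ι → E}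
    (h : ∀ j, ⟪w, p j⟫_ℝ = 0) {x : E} (hx : x ∈ span ℤ (range p)) : ⟪w, x⟫_ℝ = 0 := by
  induction hx using Submodule.span_induction with
  | mem x hx => obtain ⟨j, rfl⟩ := hx; exact h j
  | zero => exact inner_zero_right w
  | add x y _ _ hx hy => rw [inner_add_right, hx, hy, add_zero]
  | smul a x _ hx => rw [← Int.cast_smul_eq_zsmul ℝ, inner_smul_right, hx, mul_zero]

theorem norm_add_smul_sq_of_inner_eq_zero {w x : E} (h : ⟪w, x⟫_ℝ = 0) (δ : ℝ) :
    ‖x + δ • w‖ ^ 2 = ‖x‖ ^ 2 + δ ^ 2 * ‖w‖ ^ 2 := by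
  rw [norm_add_sq_real, inner_smul_right, real_inner_comm, h, norm_smul, mul_pow,
    Real.norm_eq_abs, sq_abs]
  ring

theorem norm_add_smul_sq_le {w x : E} {δ : ℝ} (h : ⟪w, x⟫_ℝ = 0) (hδ : |δ| ≤ 1 / 2)
    (hmin : ‖w‖ ≤ ‖x + δ • w‖) : ‖x + δ • w‖ ^ 2 ≤ 4 / 3 * ‖x‖ ^ 2 := by
  have hδ2 : δ ^ 2 ≤ 1 / 4 := by nlinarith [sq_abs δ, abs_nonneg δ]
  have hw2 : ‖w‖ ^ 2 ≤ ‖x + δ • w‖ ^ 2 := pow_le_pow_left₀ (norm_nonneg w) hmin 2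
  rw [norm_add_smul_sq_of_inner_eq_zero h] at hw2 ⊢
  nlinarith [sq_nonneg ‖w‖]

theorem exists_linearIndependent_mem_span_int_prod_norm_sq_le :
    ∀ {k : ℕ} (v : Fin k → E), LinearIndependent ℝ v →
      ∃ w : Fin k → E, (∀ j, w j ∈ span ℤ (range v)) ∧ LinearIndependent ℝ w ∧
        ∏ j, ‖w j‖ ^ 2 ≤ 2 ^ (k * k) * (gram ℝ v).det
  | 0, v, hv => ⟨v, finZeroElim, hv, by simp⟩
  | k + 1, v, hv => by
    obtain ⟨w, u, hw0, hmin, hspan, hdet⟩ := exists_cons_forall_norm_le_det_gram_eq hv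
    obtain ⟨c, hp, hdetp⟩ := exists_inner_add_smul_eq_zero_det_gram_eq hw0 u
    rw [hdet] at hdetp
    set p : Fin k → E := fun j => u j + c j • w
    have hw : 0 < ‖w‖ ^ 2 := by positivity
    have hpli : LinearIndependent ℝ p := by
      have := det_gram_ne_zero_iff_linearIndependent.2 hv
      rw [hdetp] at this
      exact det_gram_ne_zero_iff_linearIndependent.1 (right_ne_zero_of_mul this)
    obtain ⟨wb, hwbL, hwb, hprod⟩ := exists_linearIndependent_mem_span_int_prod_norm_sq_le p hpli
    have hwbw : ∀ j, ⟪w, wb j⟫_ℝ = 0 := fun j => inner_eq_zero_of_mem_span_int hp (hwbL j)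
    choose δ hδ hδL using fun j => exists_abs_le_half_add_smul_mem_span_int w u c (hwbL j)
    have hWmin : ∀ j, ‖w‖ ≤ ‖wb j + δ j • w‖ := fun j => by
      refine hmin _ (hspan (hδL j)) fun h0 => hwb.ne_zero j ?_
      have := norm_add_smul_sq_of_inner_eq_zero (hwbw j) (δ j)
      rw [h0, norm_zero] at this
      exact norm_eq_zero.1 (by nlinarith [sq_nonneg ‖wb j‖, sq_nonneg (δ j), sq_nonneg ‖w‖])
    refine ⟨Fin.cons w fun j => wb j + δ j • w, fun j => ?_, ?_, ?_⟩
    · cases j using Fin.cases with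
      | zero => exact hspan (subset_span ⟨0, rfl⟩)
      | succ j => exact hspan (hδL j)
    · rw [← det_gram_ne_zero_iff_linearIndependent, det_gram_cons_add_smul,
        det_gram_cons_of_inner_eq_zero w wb hwbw]
      exact mul_ne_zero (by simpa using hw.ne') (det_gram_ne_zero_iff_linearIndependent.2 hwb)
    · rw [Fin.prod_univ_succ]
      simp only [Fin.cons_zero, Fin.cons_succ]
      calc ‖w‖ ^ 2 * ∏ j, ‖wb j + δ j • w‖ ^ 2
          ≤ ‖w‖ ^ 2 * ∏ j, (4 / 3 * ‖wb j‖ ^ 2) := by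
            gcongr with j
            exact norm_add_smul_sq_le (hwbw j) (hδ j) (hWmin j)
        _ = (4 / 3) ^ k * (‖w‖ ^ 2 * ∏ j, ‖wb j‖ ^ 2) := by
            rw [Finset.prod_mul_distrib, Finset.prod_const, Finset.card_univ, Fintype.card_fin]
            ring
        _ ≤ (4 / 3) ^ k * (‖w‖ ^ 2 * (2 ^ (k * k) * (gram ℝ p).det)) := by gcongr
        _ = (4 / 3) ^ k * 2 ^ (k * k) * (gram ℝ v).det := by rw [hdetp]; ring
        _ ≤ 2 ^ ((k + 1) * (k + 1)) * (gram ℝ v).det :=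
            mul_le_mul_of_nonneg_right (four_thirds_pow_mul_two_pow_le k)
              (posSemidef_gram ℝ v).det_nonneg

end Hermite

theorem Module.Basis.norm_le_sum_norm_div_two_of_forall_norm_le_norm_sub {F : Type*}
    [NormedAddCommGroup F] [NormedSpace ℝ F] {ι : Type*} [Fintype ι] (b : Basis ι ℝ F) {r : F}
    (hr : ∀ u ∈ span ℤ (range b), ‖r‖ ≤ ‖r - u‖) : ‖r‖ ≤ (∑ i, ‖b i‖) / 2 := by
  set u := ∑ i, round (b.repr r i) • b i
  have hu : u ∈ span ℤ (range b) := sum_mem fun i _ => zsmul_mem (subset_span (mem_range_self i)) _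
  calc ‖r‖ ≤ ‖r - u‖ := hr u hu
    _ = ‖∑ i, (b.repr r i - round (b.repr r i)) • b i‖ := by
        conv_lhs => rw [← b.sum_repr r]
        simp [u, sub_smul, Finset.sum_sub_distrib, ← Int.cast_smul_eq_zsmul ℝ]
    _ ≤ ∑ i, ‖(b.repr r i - round (b.repr r i)) • b i‖ := norm_sum_le _ _
    _ ≤ ∑ i, 1 / 2 * ‖b i‖ := Finset.sum_le_sum fun i _ => by
        rw [_root_.norm_smul, Real.norm_eq_abs]
        gcongr
        exact abs_sub_round _
    _ = (∑ i, ‖b i‖) / 2 := by rw [← Finset.mul_sum]; ring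

section Adjugate

variable {ι : Type*} [Fintype ι] [DecidableEq ι]

theorem abs_det_le_factorial_mul_prod {R : Type*} [CommRing R] [LinearOrder R]
    [IsStrictOrderedRing R] (A : Matrix ι ι R) (g : ι → R) (hg : ∀ i j, |A i j| ≤ g j) :
    |A.det| ≤ (Fintype.card ι)! * ∏ j, g j := by
  rw [det_apply]
  calc |∑ σ : Equiv.Perm ι, Equiv.Perm.sign σ • ∏ i, A (σ i) i|
      ≤ ∑ σ : Equiv.Perm ι, |Equiv.Perm.sign σ • ∏ i, A (σ i) i| :=
        Finset.abs_sum_le_sum_abs _ _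
    _ ≤ ∑ _σ : Equiv.Perm ι, ∏ j, g j := Finset.sum_le_sum fun σ _ => by
        have hsign : |Equiv.Perm.sign σ • ∏ i, A (σ i) i| = |∏ i, A (σ i) i| := by
          rcases Int.units_eq_one_or (Equiv.Perm.sign σ) with h | h <;> simp [h, Units.smul_def]
        rw [hsign, Finset.abs_prod]
        exact Finset.prod_le_prod (fun i _ => abs_nonneg _) fun i _ => hg _ i
    _ = (Fintype.card ι)! * ∏ j, g j := by
        rw [Finset.sum_const, Finset.card_univ, Fintype.card_perm, nsmul_eq_mul]

theorem sum_mul_adjugate_apply {α : Type*} [CommRing α] (A : Matrix ι ι α) (i₀ : ι)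
    (y : ι → α) : ∑ i, y i * A.adjugate i₀ i = (A.updateCol i₀ y).det := by
  rw [← cramer_apply, cramer_eq_adjugate_mulVec]
  simp [mulVec, dotProduct, mul_comm]

theorem adjugate_apply_ne_zero {A : Matrix ι ι ℝ} (hA : A.det ≠ 0) (i₀ : ι) :
    A.adjugate i₀ ≠ 0 := fun h0 => by
  have := sum_mul_adjugate_apply A i₀ fun i => A i i₀
  rw [h0, updateCol_eq_self] at this
  simp only [Pi.zero_apply, mul_zero, Finset.sum_const_zero] at this
  exact hA this.symm

theorem norm_adjugate_apply_mul_norm_col_le (A : Matrix ι ι ℝ) (i₀ : ι) :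
    ‖A.adjugate i₀‖ * ‖A.col i₀‖ ≤ (Fintype.card ι)! * ∏ j, ‖A.col j‖ := by
  set g : ι → ℝ := Function.update (fun j => ‖A.col j‖) i₀ 1
  have hg0 : 0 ≤ ∏ j, g j := Finset.prod_nonneg fun j _ => by by_cases hj : j = i₀ <;> simp [g, hj]
  have hg : (∏ j, g j) * ‖A.col i₀‖ = ∏ j, ‖A.col j‖ := by
    rw [Finset.prod_update_of_mem (Finset.mem_univ i₀), one_mul,
      ← Finset.prod_singleton (fun j => ‖A.col j‖) i₀, Finset.prod_sdiff (Finset.subset_univ _)]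
  have hA : ‖A.adjugate i₀‖ ≤ (Fintype.card ι)! * ∏ j, g j := by
    refine (pi_norm_le_iff_of_nonneg (by positivity)).2 fun ℓ => ?_
    have hℓ : A.adjugate i₀ ℓ = (A.updateCol i₀ (Pi.single ℓ 1)).det := by
      rw [← sum_mul_adjugate_apply]
      simp [Pi.single_apply]
    rw [Real.norm_eq_abs, hℓ]
    refine abs_det_le_factorial_mul_prod _ g fun i j => ?_
    by_cases hj : j = i₀
    · subst hj
      by_cases hi : i = ℓ <;> simp [g, hi]
    · simpa [g, hj] using norm_le_pi_norm (A.col j) i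
  calc ‖A.adjugate i₀‖ * ‖A.col i₀‖ ≤ (Fintype.card ι)! * (∏ j, g j) * ‖A.col i₀‖ := by gcongr
    _ = (Fintype.card ι)! * ∏ j, ‖A.col j‖ := by rw [mul_assoc, hg]

end Adjugate

section Lattice

variable {n : ℕ} {B : Matrix (Fin n) (Fin n) ℝ}

theorem latticeOf_eq_span (B : Matrix (Fin n) (Fin n) ℝ) :
    latticeOf B = span ℤ (range B.col) := by
  ext x
  rw [SetLike.mem_coe, mem_span_range_iff_exists_fun]
  change (∃ m : Fin n → ℤ, _) ↔ _
  refine exists_congr fun m => ?_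
  have : B *ᵥ (fun i => (m i : ℝ)) = ∑ i, m i • B.col i := by
    ext a
    simp [mulVec, dotProduct, Matrix.col, Finset.sum_apply, mul_comm, ← Int.cast_smul_eq_zsmul ℝ]
  rw [this, eq_comm]

theorem exists_det_eq_mul_intCast {M : Matrix (Fin n) (Fin n) ℝ}
    (hM : ∀ j, M.col j ∈ latticeOf B) : ∃ z : ℤ, M.det = B.det * z := by
  choose m hm using hM
  have hBM : M = B * (of fun i j => (m j i : ℝ)) := by
    ext i j
    simpa [Matrix.col, mulVec, dotProduct, mul_apply] using congrFun (hm j) i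
  exact ⟨(of fun i j => m j i).det, by rw [hBM, det_mul, Int.cast_det]; rfl⟩

theorem adjugate_apply_mem_dualLattice (hB : |B.det| = 1) {A : Matrix (Fin n) (Fin n) ℝ}
    (hA : ∀ j, A.col j ∈ latticeOf B) (i₀ : Fin n) :
    A.adjugate i₀ ∈ dualLattice (latticeOf B) := fun x hx => by
  obtain ⟨z, hz⟩ := exists_det_eq_mul_intCast (B := B) (M := A.updateCol i₀ x) fun j => by
    by_cases hj : j = i₀
    · subst hj; convert hx using 1; ext i; simp [Matrix.col]
    · convert hA j using 1; ext i; simp [Matrix.col, hj]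
  rw [sum_mul_adjugate_apply, hz]
  rcases abs_eq zero_le_one |>.1 hB with h | h
  · exact ⟨z, by rw [h, one_mul]⟩
  · exact ⟨-z, by rw [h]; push_cast; ring⟩

theorem exists_linearIndependent_forall_mem_latticeOf_prod_norm_le (hB : |B.det| = 1) :
    ∃ w : Fin n → Fin n → ℝ, (∀ j, w j ∈ latticeOf B) ∧ LinearIndependent ℝ w ∧
      ∏ j, ‖w j‖ ≤ 2 ^ (n * n) := by
  set e := WithLp.linearEquiv 2 ℝ (Fin n → ℝ)
  set v : Fin n → EuclideanSpace ℝ (Fin n) := fun j => WithLp.toLp 2 (B.col j)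
  have hB0 : B.det ≠ 0 := by rintro h; simp [h] at hB
  have hv : LinearIndependent ℝ v :=
    (linearIndependent_cols_of_det_ne_zero hB0).map' e.symm.toLinearMap e.symm.ker
  have hgram : (gram ℝ v).det = 1 := by
    have : gram ℝ v = Bᵀ * B := by
      ext i j
      simp [v, gram_apply, EuclideanSpace.inner_toLp_toLp, mul_apply, dotProduct, Matrix.col,
        mul_comm]
    rw [this, det_mul, det_transpose, ← sq, ← sq_abs, hB, one_pow]
  obtain ⟨w, hwL, hw, hprod⟩ := exists_linearIndependent_mem_span_int_prod_norm_sq_le v hv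
  refine ⟨fun j => WithLp.ofLp (w j), fun j => ?_, hw.map' e.toLinearMap e.ker, ?_⟩
  · have := mem_map_of_mem (f := e.toLinearMap.restrictScalars ℤ) (hwL j)
    rw [map_span, ← range_comp] at this
    rw [latticeOf_eq_span]
    exact this
  · have hle : ∏ j, ‖WithLp.ofLp (w j)‖ ≤ ∏ j, ‖w j‖ :=
      Finset.prod_le_prod (fun _ _ => norm_nonneg _) fun j _ =>
        (pi_norm_le_iff_of_nonneg (norm_nonneg _)).2 fun i => PiLp.norm_apply_le (w j) i
    have hsq : (∏ j, ‖w j‖) ^ 2 ≤ (2 ^ (n * n)) ^ 2 := by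
      rw [← Finset.prod_pow]
      refine (hprod.trans_eq (by rw [hgram, mul_one])).trans ?_
      nlinarith [one_le_pow₀ (M₀ := ℝ) (n := n * n) one_le_two]
    exact hle.trans (pow_le_pow_iff_left₀ (by positivity) (by positivity) two_ne_zero |>.1 hsq)

theorem norm_le_sum_norm_div_two_of_mem_dirichletDomain {w : Fin n → Fin n → ℝ}
    (hwL : ∀ j, w j ∈ latticeOf B) (hw : LinearIndependent ℝ w) {r : Fin n → ℝ}
    (hr : r ∈ dirichletDomain (latticeOf B)) : ‖r‖ ≤ (∑ j, ‖w j‖) / 2 := by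
  have hspan : span ℤ (range w) ≤ span ℤ (range B.col) :=
    span_le.2 (range_subset_iff.2 fun j => latticeOf_eq_span B ▸ hwL j)
  simpa using (basisOfLinearIndependentOfCardEqFinrank' w hw (by simp))
    |>.norm_le_sum_norm_div_two_of_forall_norm_le_norm_sub fun u hu =>
      hr u (latticeOf_eq_span B ▸ hspan (by simpa using hu))

end Lattice

theorem stmt_19 (n : ℕ) :
    ∃ C : ℝ, 0 < C ∧
      ∀ (B : Matrix (Fin n) (Fin n) ℝ), |B.det| = 1 →
        ∀ R : ℝ, 0 < R →
          ¬ dirichletDomain (latticeOf B) ⊆ Metric.ball (0 : Fin n → ℝ) R →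
            ∃ s : Fin n → ℝ, s ∈ dualLattice (latticeOf B) ∧ s ≠ 0 ∧ ‖s‖ ≤ C / R := by
  refine ⟨(n + 1)! * 2 ^ (n * n), by positivity, fun B hB R hR hD => ?_⟩
  obtain ⟨r, hrD, hrR⟩ := Set.not_subset.1 hD
  obtain ⟨w, hwL, hw, hprod⟩ := exists_linearIndependent_forall_mem_latticeOf_prod_norm_le hB
  have hR2 : 2 * R ≤ ∑ j, ‖w j‖ := by
    have := norm_le_sum_norm_div_two_of_mem_dirichletDomain hwL hw hrD
    linarith [not_lt.1 (by simpa using hrR : ¬‖r‖ < R)]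
  obtain ⟨i₀, -, hi₀⟩ := Finset.exists_max_image Finset.univ (fun j => ‖w j‖) <|
    Finset.univ_nonempty_iff.2 (by by_contra! h; simp at hR2; linarith)
  set A : Matrix (Fin n) (Fin n) ℝ := (of w)ᵀ
  have hA : A.det ≠ 0 := by
    rw [det_transpose]
    exact ((isUnit_iff_isUnit_det _).1 (linearIndependent_rows_iff_isUnit.1 hw)).ne_zero
  refine ⟨A.adjugate i₀, adjugate_apply_mem_dualLattice hB hwL i₀, adjugate_apply_ne_zero hA i₀,
    (le_div_iff₀ hR).2 ?_⟩
  have hsum : ∑ j, ‖w j‖ ≤ n * ‖w i₀‖ := by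
    simpa using Finset.sum_le_card_nsmul Finset.univ _ _ fun j _ => hi₀ j (Finset.mem_univ j)
  have hadj : ‖A.adjugate i₀‖ * ‖w i₀‖ ≤ n ! * 2 ^ (n * n) := by
    have := (norm_adjugate_apply_mul_norm_col_le A i₀).trans
      (mul_le_mul_of_nonneg_left hprod (by positivity))
    rwa [Fintype.card_fin] at this
  have : (0 : ℝ) ≤ n ! * 2 ^ (n * n) := by positivity
  push_cast [Nat.factorial_succ]
  nlinarith [norm_nonneg (A.adjugate i₀)]
end
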